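/- arXiv:1501.05388 — 8 statements merged into one kernel-verified Lean document; each statement's English description precedes it below -/
import Mathlib

section
/- Let n ≥ 1 and let α_1,…,α_n, β_1,…,β_n be real numbers with α_i ≥ β_i ≥ 0 for every i. For a subset J of {1,…,n} put s(J) = Σ_{i∈J} α_i + Σ_{i∉J} β_i. Then the function U(x) = [∏_{J ⊆ {1,…,n}, |J| even} Γ(x + s(J))] / [∏_{J ⊆ {1,…,n}, |J| odd} Γ(x + s(J))] is logarithmically completely monotonic on (0,∞). -/
open Finset Set

lemma summable_sq {c : ℝ} (hc : 0 < c) : Summable (fun k : ℕ => ((c + k) ^ 2)⁻¹) := by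
  have hd : 0 < min c 1 := lt_min hc one_pos
  have hbase : Summable (fun k : ℕ => (((k : ℝ) + 1) ^ 2)⁻¹) := by
    have := (summable_nat_add_iff (f := fun n : ℕ => 1 / (n : ℝ) ^ 2) 1).2
      (Real.summable_one_div_nat_pow.2 one_lt_two)
    refine this.congr fun k => ?_
    push_cast
    rw [one_div]
  refine Summable.of_nonneg_of_le (fun k => by positivity)
    (fun k => ?_) (hbase.mul_left ((min c 1 ^ 2)⁻¹))
  have h1 : min c 1 * ((k : ℝ) + 1) ≤ c + k := by
    rcases le_total c 1 with h | h
    · rw [min_eq_left h]; nlinarith [hc.le, (Nat.cast_nonneg k : (0:ℝ) ≤ k)]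
    · rw [min_eq_right h]; nlinarith [(Nat.cast_nonneg k : (0:ℝ) ≤ k)]
  have h2 : (min c 1 * ((k : ℝ) + 1)) ^ 2 ≤ (c + k) ^ 2 := by
    apply pow_le_pow_left₀ (by positivity) h1
  calc ((c + k) ^ 2)⁻¹ ≤ ((min c 1 * ((k : ℝ) + 1)) ^ 2)⁻¹ := by
        apply inv_anti₀ (by positivity) h2
    _ = (min c 1 ^ 2)⁻¹ * (((k : ℝ) + 1) ^ 2)⁻¹ := by
        rw [mul_pow, mul_inv]

lemma Spos {n : ℕ} (α β : Fin n → ℝ) (hβ : ∀ i, 0 ≤ β i) (hαβ : ∀ i, β i ≤ α i) :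
    ∀ (s : Finset (Fin n)) (p : ℕ), 1 ≤ p → ∀ y : ℝ, 0 < y →
      0 ≤ ∑ J ∈ s.powerset,
        (-1 : ℝ) ^ J.card * (y + (∑ i ∈ J, α i + ∑ i ∈ s \ J, β i)) ^ (-(p : ℤ)) := by
  have hα : ∀ i, 0 ≤ α i := fun i => (hβ i).trans (hαβ i)
  intro s
  induction s using Finset.induction_on with
  | empty =>
      intro p hp y hy
      simp only [Finset.powerset_empty, Finset.sum_singleton, Finset.card_empty, pow_zero,
        Finset.sum_empty, Finset.empty_sdiff, add_zero, one_mul]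
      positivity
  | @insert a s ha IH =>
      intro p hp y hy
      have hc : ∀ J ∈ s.powerset, 0 ≤ ∑ i ∈ J, α i + ∑ i ∈ s \ J, β i := by
        intro J _
        have h1 : 0 ≤ ∑ i ∈ J, α i := Finset.sum_nonneg fun i _ => hα i
        have h2 : 0 ≤ ∑ i ∈ s \ J, β i := Finset.sum_nonneg fun i _ => hβ i
        linarith
      set F : ℝ → ℝ := fun z =>
        ∑ J ∈ s.powerset, (-1 : ℝ) ^ J.card * (z + (∑ i ∈ J, α i + ∑ i ∈ s \ J, β i)) ^ (-(p : ℤ))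
        with hF_def
      have key : ∀ z : ℝ, 0 < z →
          HasDerivAt F (∑ J ∈ s.powerset, (-1 : ℝ) ^ J.card *
            ((-(p : ℤ)) * (z + (∑ i ∈ J, α i + ∑ i ∈ s \ J, β i)) ^ (-(p : ℤ) - 1))) z := by
        intro z hz
        apply HasDerivAt.fun_sum
        intro J hJ
        have hpos : 0 < z + (∑ i ∈ J, α i + ∑ i ∈ s \ J, β i) := by
          have := hc J hJ; linarith
        have h0 : HasDerivAt (fun w : ℝ => w ^ (-(p : ℤ)))
            ((-(p : ℤ)) * (z + (∑ i ∈ J, α i + ∑ i ∈ s \ J, β i)) ^ (-(p : ℤ) - 1))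
            (z + (∑ i ∈ J, α i + ∑ i ∈ s \ J, β i)) := by
          have h := hasDerivAt_zpow (-(p : ℤ)) (z + (∑ i ∈ J, α i + ∑ i ∈ s \ J, β i))
            (Or.inl hpos.ne')
          push_cast at h
          exact_mod_cast h
        exact (h0.comp_add_const z _).const_mul _
      have hderiv_nonpos : ∀ z : ℝ, 0 < z → deriv F z ≤ 0 := by
        intro z hz
        rw [(key z hz).deriv]
        have : ∑ J ∈ s.powerset, (-1 : ℝ) ^ J.card *
            ((-(p : ℤ)) * (z + (∑ i ∈ J, α i + ∑ i ∈ s \ J, β i)) ^ (-(p : ℤ) - 1))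
            = -(p : ℝ) * ∑ J ∈ s.powerset, (-1 : ℝ) ^ J.card *
              (z + (∑ i ∈ J, α i + ∑ i ∈ s \ J, β i)) ^ (-((p + 1 : ℕ) : ℤ)) := by
          rw [Finset.mul_sum]
          refine Finset.sum_congr rfl fun J hJ => ?_
          have : (-(p : ℤ)) - 1 = -((p + 1 : ℕ) : ℤ) := by push_cast; ring
          rw [this]; push_cast; ring
        rw [this]
        have hS := IH (p + 1) (by omega) z hz
        have hp' : (0 : ℝ) ≤ p := by positivity
        nlinarith
      -- antitone on Ici (y + β a)
      have hyb : 0 < y + β a := by have := hβ a; linarith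
      have hanti : AntitoneOn F (Set.Ici (y + β a)) := by
        apply antitoneOn_of_deriv_nonpos (convex_Ici _)
        · intro z hz
          have hz' : 0 < z := lt_of_lt_of_le hyb hz
          exact (key z hz').differentiableAt.continuousAt.continuousWithinAt
        · intro z hz
          rw [interior_Ici] at hz
          have hz' : 0 < z := lt_trans hyb hz
          exact ((key z hz').differentiableAt).differentiableWithinAt
        · intro z hz
          rw [interior_Ici] at hz
          exact hderiv_nonpos z (lt_trans hyb hz)
      have hmain : F (y + α a) ≤ F (y + β a) :=
        hanti (Set.self_mem_Ici) (by simp only [Set.mem_Ici]; have := hαβ a; linarith)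
          (by have := hαβ a; linarith)
      -- now rewrite the insert sum
      rw [Finset.sum_powerset_insert ha]
      have e1 : ∀ J ∈ s.powerset,
          (-1 : ℝ) ^ J.card * (y + (∑ i ∈ J, α i + ∑ i ∈ insert a s \ J, β i)) ^ (-(p : ℤ))
          = (-1 : ℝ) ^ J.card *
            ((y + β a) + (∑ i ∈ J, α i + ∑ i ∈ s \ J, β i)) ^ (-(p : ℤ)) := by
        intro J hJ
        have haJ : a ∉ J := fun h => ha (Finset.mem_powerset.1 hJ h)
        have hins : insert a s \ J = insert a (s \ J) := by
          ext i
          simp only [Finset.mem_sdiff, Finset.mem_insert]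
          constructor
          · rintro ⟨h1 | h1, h2⟩
            · exact Or.inl h1
            · exact Or.inr ⟨h1, h2⟩
          · rintro (rfl | ⟨h1, h2⟩)
            · exact ⟨Or.inl rfl, haJ⟩
            · exact ⟨Or.inr h1, h2⟩
        rw [hins, Finset.sum_insert (fun h => ha (Finset.mem_sdiff.1 h).1)]
        ring_nf
      have e2 : ∀ J ∈ s.powerset,
          (-1 : ℝ) ^ (insert a J).card *
            (y + (∑ i ∈ insert a J, α i + ∑ i ∈ insert a s \ insert a J, β i)) ^ (-(p : ℤ))
          = -((-1 : ℝ) ^ J.card *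
            ((y + α a) + (∑ i ∈ J, α i + ∑ i ∈ s \ J, β i)) ^ (-(p : ℤ))) := by
        intro J hJ
        have haJ : a ∉ J := fun h => ha (Finset.mem_powerset.1 hJ h)
        have hJs : J ⊆ s := Finset.mem_powerset.1 hJ
        have hsd : insert a s \ insert a J = s \ J := by
          ext i
          simp only [Finset.mem_sdiff, Finset.mem_insert]
          constructor
          · rintro ⟨h1 | h1, h2⟩
            · exact absurd (Or.inl h1) h2
            · push_neg at h2
              exact ⟨h1, h2.2⟩
          · rintro ⟨h1, h2⟩
            refine ⟨Or.inr h1, ?_⟩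
            push_neg
            exact ⟨fun h => ha (h ▸ h1), h2⟩
        rw [hsd, Finset.card_insert_of_notMem haJ, Finset.sum_insert haJ, pow_succ]
        ring_nf
      rw [Finset.sum_congr rfl e1, Finset.sum_congr rfl e2]
      rw [Finset.sum_neg_distrib]
      have : (0:ℝ) ≤ F (y + β a) - F (y + α a) := by linarith
      simpa [hF_def] using this

noncomputable def psi : ℝ → ℝ := deriv (fun y => Real.log (Real.Gamma y))

lemma logGamma_diff {x : ℝ} (hx : 0 < x) :
    DifferentiableAt ℝ (fun y => Real.log (Real.Gamma y)) x := by
  have h : ∀ m : ℕ, x ≠ -(m : ℝ) := by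
    intro m
    have h0 : (0:ℝ) ≤ m := Nat.cast_nonneg m
    intro he
    rw [he] at hx
    linarith
  exact (Real.differentiableAt_Gamma h).log (Real.Gamma_pos_of_pos hx).ne'

lemma psi_rec {x : ℝ} (hx : 0 < x) : psi (x + 1) = psi x + 1 / x := by
  have h_rec : ∀ z : ℝ, 0 < z →
      Real.log (Real.Gamma (z + 1)) = Real.log (Real.Gamma z) + Real.log z := by
    intro z hz
    rw [Real.Gamma_add_one hz.ne', Real.log_mul hz.ne' (Real.Gamma_pos_of_pos hz).ne', add_comm]
  rw [psi, ← deriv_comp_add_const, one_div, ← Real.deriv_log,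
    ← deriv_add (logGamma_diff hx) (Real.differentiableAt_log hx.ne')]
  apply Filter.EventuallyEq.deriv_eq
  filter_upwards [eventually_gt_nhds hx] using h_rec

lemma psi_mono {a b : ℝ} (ha : 0 < a) (hab : a ≤ b) : psi a ≤ psi b := by
  have h := Real.convexOn_log_Gamma.monotoneOn_deriv
    (fun x hx => by
      simpa [Function.comp_def] using logGamma_diff (show (0:ℝ) < x from hx))
    (Set.mem_Ioi.2 ha) (Set.mem_Ioi.2 (lt_of_lt_of_le ha hab)) hab
  simpa [psi, Function.comp_def] using h

lemma psi_add_nat {x : ℝ} (hx : 0 < x) (M : ℕ) :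
    psi (x + M) = psi x + ∑ j ∈ Finset.range M, 1 / (x + j) := by
  induction M with
  | zero => simp
  | succ M ih =>
      have h1 : x + (M + 1 : ℕ) = (x + M) + 1 := by push_cast; ring
      rw [h1, psi_rec (by positivity), ih, Finset.sum_range_succ]
      push_cast
      ring

lemma psi_diff_le {x : ℝ} (hx : 0 < x) {s : ℝ} (hs : 0 ≤ s) (M : ℕ) (hsM : s ≤ M) :
    psi (x + s) - psi x ≤ M / x := by
  have h1 : psi (x + s) ≤ psi (x + M) := psi_mono (by linarith) (by linarith)
  have h2 : psi (x + M) = psi x + ∑ j ∈ Finset.range M, 1 / (x + j) := psi_add_nat hx M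
  have h3 : ∑ j ∈ Finset.range M, 1 / (x + j) ≤ M / x := by
    calc ∑ j ∈ Finset.range M, 1 / (x + j) ≤ ∑ _j ∈ Finset.range M, 1 / x := by
          apply Finset.sum_le_sum
          intro j _
          apply one_div_le_one_div_of_le hx
          have : (0:ℝ) ≤ j := Nat.cast_nonneg j
          linarith
      _ = M / x := by rw [Finset.sum_const, Finset.card_range]; push_cast; ring
  linarith

lemma psi_diff_nonneg {x : ℝ} (hx : 0 < x) {s : ℝ} (hs : 0 ≤ s) :
    0 ≤ psi (x + s) - psi x := by
  have := psi_mono hx (by linarith : x ≤ x + s)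
  linarith

section Series

variable {n : ℕ} (α β : Fin n → ℝ)

noncomputable def sfun (J : Finset (Fin n)) : ℝ := ∑ i ∈ J, α i + ∑ i ∈ Jᶜ, β i

noncomputable def gser (m k : ℕ) (y : ℝ) : ℝ :=
  ∑ J : Finset (Fin n), (-1:ℝ)^J.card * (-1:ℝ)^m * (m.factorial : ℝ) *
    (y + k + sfun α β J) ^ (-((m+1 : ℕ) : ℤ))

noncomputable def Wser (m : ℕ) (y : ℝ) : ℝ := ∑' k : ℕ, gser α β m k y

variable (hβ : ∀ i, 0 ≤ β i) (hαβ : ∀ i, β i ≤ α i)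

include hβ hαβ

lemma sfun_nonneg (J : Finset (Fin n)) : 0 ≤ sfun α β J := by
  have h1 : (0:ℝ) ≤ ∑ i ∈ J, α i :=
    Finset.sum_nonneg fun i _ => (hβ i).trans (hαβ i)
  have h2 : (0:ℝ) ≤ ∑ i ∈ Jᶜ, β i := Finset.sum_nonneg fun i _ => hβ i
  have : sfun α β J = ∑ i ∈ J, α i + ∑ i ∈ Jᶜ, β i := rfl
  linarith

lemma sfun_le (J : Finset (Fin n)) : sfun α β J ≤ ∑ i, α i := by
  have h1 : ∑ i ∈ Jᶜ, β i ≤ ∑ i ∈ Jᶜ, α i := Finset.sum_le_sum fun i _ => hαβ i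
  have h2 : ∑ i ∈ J, α i + ∑ i ∈ Jᶜ, α i = ∑ i, α i := by
    rw [Finset.sum_add_sum_compl]
  have : sfun α β J = ∑ i ∈ J, α i + ∑ i ∈ Jᶜ, β i := rfl
  linarith

lemma Spos_univ (p : ℕ) (hp : 1 ≤ p) {y : ℝ} (hy : 0 < y) :
    0 ≤ ∑ J : Finset (Fin n), (-1:ℝ)^J.card * (y + sfun α β J) ^ (-(p : ℤ)) := by
  have h := Spos α β hβ hαβ Finset.univ p hp y hy
  rw [Finset.powerset_univ] at h
  refine le_of_le_of_eq h (Finset.sum_congr rfl fun J _ => ?_)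
  rw [sfun, Finset.compl_eq_univ_sdiff]

lemma gser_nonneg_alt (m k : ℕ) {y : ℝ} (hy : 0 < y) :
    0 ≤ (-1:ℝ)^m * gser α β m k y := by
  have h := Spos_univ α β hβ hαβ (m+1) (by omega) (show (0:ℝ) < y + k by positivity)
  have he : (-1:ℝ)^m * gser α β m k y
      = (m.factorial : ℝ) * ∑ J : Finset (Fin n),
          (-1:ℝ)^J.card * (y + k + sfun α β J) ^ (-((m+1:ℕ) : ℤ)) := by
    rw [gser, Finset.mul_sum, Finset.mul_sum]
    refine Finset.sum_congr rfl fun J _ => ?_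
    have hm : (-1:ℝ)^m * (-1:ℝ)^m = 1 := by
      rw [← pow_add]; exact Even.neg_one_pow ⟨m, by ring⟩
    linear_combination ((-1:ℝ)^J.card * (m.factorial : ℝ) *
      (y + k + sfun α β J) ^ (-((m+1:ℕ) : ℤ))) * hm
  rw [he]
  exact mul_nonneg (by positivity) h

lemma gser_hasDerivAt (m k : ℕ) {y : ℝ} (hy : 0 < y) :
    HasDerivAt (gser α β m k) (gser α β (m+1) k y) y := by
  have h : HasDerivAt (gser α β m k)
      (∑ J : Finset (Fin n), (-1:ℝ)^J.card * (-1:ℝ)^m * (m.factorial : ℝ) *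
        ((-((m+1:ℕ) : ℤ)) * (y + k + sfun α β J) ^ (-((m+1:ℕ) : ℤ) - 1))) y := by
    apply HasDerivAt.fun_sum
    intro J _
    have hpos : 0 < y + (k + sfun α β J) := by
      have := sfun_nonneg α β hβ hαβ J
      have hk : (0:ℝ) ≤ k := Nat.cast_nonneg k
      linarith
    have h0 := hasDerivAt_zpow (-((m+1:ℕ) : ℤ)) (y + (k + sfun α β J)) (Or.inl hpos.ne')
    have h1 := (h0.comp_add_const y _).const_mul
      ((-1:ℝ)^J.card * (-1:ℝ)^m * (m.factorial : ℝ))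
    have he : (fun z : ℝ => (-1:ℝ)^J.card * (-1:ℝ)^m * (m.factorial : ℝ) *
        (z + (k + sfun α β J)) ^ (-((m+1:ℕ) : ℤ)))
        = fun z : ℝ => (-1:ℝ)^J.card * (-1:ℝ)^m * (m.factorial : ℝ) *
        (z + k + sfun α β J) ^ (-((m+1:ℕ) : ℤ)) := by
      funext z; rw [add_assoc]
    rw [he] at h1
    have hb : y + ((k:ℝ) + sfun α β J) = y + k + sfun α β J := (add_assoc _ _ _).symm
    rw [hb] at h1
    exact_mod_cast h1
  convert h using 1
  rw [gser]
  refine Finset.sum_congr rfl fun J _ => ?_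
  have hexp : (-((m+1+1:ℕ) : ℤ)) = (-((m+1:ℕ) : ℤ)) - 1 := by push_cast; ring
  rw [hexp, Nat.factorial_succ]
  push_cast
  ring

lemma gser_bound (m k : ℕ) (hm : 1 ≤ m) {ε y : ℝ} (hε : 0 < ε) (hy : ε ≤ y) :
    |gser α β m k y| ≤ ((Fintype.card (Finset (Fin n)) : ℝ) * (m.factorial : ℝ) *
      (ε ^ (m-1))⁻¹) * ((ε + k) ^ 2)⁻¹ := by
  have hεk : (0:ℝ) < ε + k := by positivity
  have hterm : ∀ J : Finset (Fin n),
      |(-1:ℝ)^J.card * (-1:ℝ)^m * (m.factorial : ℝ) *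
        (y + k + sfun α β J) ^ (-((m+1:ℕ) : ℤ))|
      ≤ (m.factorial : ℝ) * ((ε ^ (m-1))⁻¹ * ((ε + k) ^ 2)⁻¹) := by
    intro J
    have hs := sfun_nonneg α β hβ hαβ J
    have hbase : (0:ℝ) < y + k + sfun α β J := by
      have hk : (0:ℝ) ≤ k := Nat.cast_nonneg k
      linarith
    have hble : ε + k ≤ y + k + sfun α β J := by linarith
    rw [abs_mul, abs_mul, abs_mul]
    simp only [abs_pow, abs_neg, abs_one, one_pow, one_mul,
      Nat.abs_cast]
    have h2 : |(y + k + sfun α β J) ^ (-((m+1:ℕ) : ℤ))|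
        = ((y + k + sfun α β J) ^ (m+1))⁻¹ := by
      rw [abs_of_pos (zpow_pos hbase _), zpow_neg, zpow_natCast]
    rw [h2]
    have h3 : ((y + k + sfun α β J) ^ (m+1))⁻¹ ≤ ((ε + k) ^ (m+1))⁻¹ := by
      apply inv_anti₀ (by positivity)
      exact pow_le_pow_left₀ hεk.le hble _
    have h4 : ((ε + k) ^ (m+1))⁻¹ ≤ (ε ^ (m-1))⁻¹ * ((ε + k) ^ 2)⁻¹ := by
      have hsplit : (ε + k) ^ (m+1) = (ε + k) ^ (m-1) * (ε + k) ^ 2 := by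
        rw [← pow_add]
        congr 1
        omega
      rw [hsplit, mul_inv]
      apply mul_le_mul_of_nonneg_right _ (by positivity)
      apply inv_anti₀ (by positivity)
      apply pow_le_pow_left₀ hε.le (by linarith)
    have hf : (0:ℝ) ≤ (m.factorial : ℝ) := by positivity
    calc (m.factorial : ℝ) * ((y + k + sfun α β J) ^ (m+1))⁻¹
        ≤ (m.factorial : ℝ) * ((ε + k) ^ (m+1))⁻¹ :=
          mul_le_mul_of_nonneg_left h3 hf
      _ ≤ (m.factorial : ℝ) * ((ε ^ (m-1))⁻¹ * ((ε + k) ^ 2)⁻¹) :=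
          mul_le_mul_of_nonneg_left h4 hf
  calc |gser α β m k y| ≤ ∑ J : Finset (Fin n),
        |(-1:ℝ)^J.card * (-1:ℝ)^m * (m.factorial : ℝ) *
          (y + k + sfun α β J) ^ (-((m+1:ℕ) : ℤ))| := Finset.abs_sum_le_sum_abs _ _
    _ ≤ ∑ _J : Finset (Fin n),
        (m.factorial : ℝ) * ((ε ^ (m-1))⁻¹ * ((ε + k) ^ 2)⁻¹) :=
        Finset.sum_le_sum fun J _ => hterm J
    _ = ((Fintype.card (Finset (Fin n)) : ℝ) * (m.factorial : ℝ) *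
        (ε ^ (m-1))⁻¹) * ((ε + k) ^ 2)⁻¹ := by
        rw [Finset.sum_const, Finset.card_univ, nsmul_eq_mul]
        ring

noncomputable def Vfun (x : ℝ) : ℝ :=
  ∑ J : Finset (Fin n), (-1:ℝ)^J.card * psi (x + sfun α β J)

lemma Vfun_hasDerivAt {x : ℝ} (hx : 0 < x) :
    HasDerivAt (fun y => ∑ J : Finset (Fin n),
      (-1:ℝ)^J.card * Real.log (Real.Gamma (y + sfun α β J))) (Vfun α β x) x := by
  apply HasDerivAt.fun_sum
  intro J _
  have hpos : 0 < x + sfun α β J := by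
    have := sfun_nonneg α β hβ hαβ J; linarith
  have hd : HasDerivAt (fun y => Real.log (Real.Gamma y)) (psi (x + sfun α β J))
      (x + sfun α β J) := (logGamma_diff hpos).hasDerivAt
  exact (hd.comp_add_const x _).const_mul _

lemma Vfun_rec {x : ℝ} (hx : 0 < x) :
    Vfun α β (x + 1) = Vfun α β x + gser α β 0 0 x := by
  rw [Vfun, Vfun, gser, ← Finset.sum_add_distrib]
  refine Finset.sum_congr rfl fun J _ => ?_
  have hpos : 0 < x + sfun α β J := by
    have := sfun_nonneg α β hβ hαβ J; linarith
  have h1 : x + 1 + sfun α β J = (x + sfun α β J) + 1 := by ring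
  rw [h1, psi_rec hpos]
  simp only [pow_zero, Nat.factorial_zero, Nat.cast_zero, add_zero, Nat.cast_one, one_mul,
    mul_one]
  rw [show (-((0+1:ℕ):ℤ)) = (-1 : ℤ) from by norm_num, zpow_neg_one, one_div]
  ring

lemma gser_shift (N : ℕ) (x : ℝ) : gser α β 0 N x = gser α β 0 0 (x + N) := by
  rw [gser, gser]
  refine Finset.sum_congr rfl fun J _ => ?_
  norm_num

lemma sum_range_gser {x : ℝ} (hx : 0 < x) (N : ℕ) :
    ∑ k ∈ Finset.range N, gser α β 0 k x = Vfun α β (x + N) - Vfun α β x := by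
  induction N with
  | zero => simp
  | succ N ih =>
      rw [Finset.sum_range_succ, ih, gser_shift α β hβ hαβ]
      have h1 : x + ((N:ℕ) + 1 : ℕ) = (x + N) + 1 := by push_cast; ring
      rw [h1, Vfun_rec α β hβ hαβ (by positivity)]
      ring

lemma Vfun_tendsto (hn : 1 ≤ n) {x : ℝ} (hx : 0 < x) :
    Filter.Tendsto (fun N : ℕ => Vfun α β (x + N)) Filter.atTop (nhds 0) := by
  have hNe : Nonempty (Fin n) := ⟨⟨0, hn⟩⟩
  have hzero : ∑ J : Finset (Fin n), (-1:ℝ)^J.card = 0 := by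
    have h := Finset.sum_powerset_neg_one_pow_card_of_nonempty
      (Finset.univ_nonempty (α := Fin n))
    rw [Finset.powerset_univ] at h
    have := congrArg (Int.cast : ℤ → ℝ) h
    push_cast at this
    exact this
  set A : ℝ := ∑ i, α i with hA
  set M : ℕ := ⌈A⌉₊ with hM
  set C : ℝ := (Fintype.card (Finset (Fin n)) : ℝ) with hC
  have hbound : ∀ y : ℝ, 0 < y → |Vfun α β y| ≤ C * (M / y) := by
    intro y hy
    have he : Vfun α β y = ∑ J : Finset (Fin n),
        (-1:ℝ)^J.card * (psi (y + sfun α β J) - psi y) := by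
      rw [Vfun]
      rw [Finset.sum_congr rfl (fun (J : Finset (Fin n)) _ =>
        (mul_sub ((-1:ℝ)^J.card) (psi (y + sfun α β J)) (psi y)))]
      rw [Finset.sum_sub_distrib, ← Finset.sum_mul, hzero]
      ring
    rw [he]
    calc |∑ J : Finset (Fin n), (-1:ℝ)^J.card * (psi (y + sfun α β J) - psi y)|
        ≤ ∑ J : Finset (Fin n), |(-1:ℝ)^J.card * (psi (y + sfun α β J) - psi y)| :=
          Finset.abs_sum_le_sum_abs _ _
      _ ≤ ∑ _J : Finset (Fin n), (M : ℝ) / y := by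
          apply Finset.sum_le_sum
          intro J _
          rw [abs_mul, abs_pow, abs_neg, abs_one, one_pow, one_mul]
          have hs := sfun_nonneg α β hβ hαβ J
          have hsM : sfun α β J ≤ (M : ℝ) := le_trans (sfun_le α β hβ hαβ J) (Nat.le_ceil A)
          rw [abs_of_nonneg (psi_diff_nonneg hy hs)]
          exact psi_diff_le hy hs M hsM
      _ = C * ((M : ℝ) / y) := by
          rw [Finset.sum_const, Finset.card_univ, nsmul_eq_mul, hC]
  have hg : Filter.Tendsto (fun N : ℕ => C * ((M : ℝ) / (x + N))) Filter.atTop (nhds 0) := by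
    have h1 : Filter.Tendsto (fun N : ℕ => x + (N:ℝ)) Filter.atTop Filter.atTop :=
      Filter.tendsto_atTop_add_const_left _ x tendsto_natCast_atTop_atTop
    have h2 := h1.inv_tendsto_atTop
    have h3 := h2.const_mul (C * (M : ℝ))
    simp only [mul_zero] at h3
    refine h3.congr fun N => ?_
    simp only [Pi.inv_apply, div_eq_mul_inv]
    ring
  apply squeeze_zero_norm _ hg
  intro N
  rw [Real.norm_eq_abs]
  exact hbound (x + N) (by positivity)

lemma hasSum_gser0 (hn : 1 ≤ n) {x : ℝ} (hx : 0 < x) :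
    HasSum (fun k : ℕ => gser α β 0 k x) (-(Vfun α β x)) := by
  rw [hasSum_iff_tendsto_nat_of_nonneg]
  · have h1 := (Vfun_tendsto α β hβ hαβ hn hx).sub_const (Vfun α β x)
    rw [zero_sub] at h1
    refine h1.congr fun N => ?_
    exact (sum_range_gser α β hβ hαβ hx N).symm
  · intro k
    have := gser_nonneg_alt α β hβ hαβ 0 k hx
    simpa using this

lemma summable_gser (hn : 1 ≤ n) (m : ℕ) {x : ℝ} (hx : 0 < x) :
    Summable (fun k : ℕ => gser α β m k x) := by
  cases m with
  | zero => exact (hasSum_gser0 α β hβ hαβ hn hx).summable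
  | succ m =>
      apply Summable.of_norm
      have hsum : Summable (fun k : ℕ =>
          ((Fintype.card (Finset (Fin n)) : ℝ) * ((m+1).factorial : ℝ) *
            ((x/2) ^ ((m+1)-1))⁻¹) * (((x/2) + k) ^ 2)⁻¹) :=
        (summable_sq (half_pos hx)).mul_left _
      refine Summable.of_nonneg_of_le (fun k => norm_nonneg _) (fun k => ?_) hsum
      rw [Real.norm_eq_abs]
      exact gser_bound α β hβ hαβ (m+1) k (by omega) (half_pos hx) (by linarith)

lemma hasDerivAt_Wser (hn : 1 ≤ n) (m : ℕ) {x : ℝ} (hx : 0 < x) :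
    HasDerivAt (Wser α β m) (Wser α β (m+1) x) x := by
  have hhalf : 0 < x / 2 := half_pos hx
  have h := hasDerivAt_tsum_of_isPreconnected
    (u := fun k : ℕ => ((Fintype.card (Finset (Fin n)) : ℝ) * ((m+1).factorial : ℝ) *
      ((x/2) ^ ((m+1)-1))⁻¹) * (((x/2) + k) ^ 2)⁻¹)
    (g := fun k => gser α β m k) (g' := fun k => gser α β (m+1) k)
    (t := Set.Ioi (x/2)) (y₀ := x) (y := x)
    ((summable_sq hhalf).mul_left _) isOpen_Ioi isPreconnected_Ioi
    ?_ ?_ ?_ ?_ ?_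
  · exact h
  · intro k y hy
    exact gser_hasDerivAt α β hβ hαβ m k (lt_trans hhalf hy)
  · intro k y hy
    rw [Real.norm_eq_abs]
    exact gser_bound α β hβ hαβ (m+1) k (by omega) hhalf (le_of_lt hy)
  · exact Set.mem_Ioi.2 (half_lt_self hx)
  · exact summable_gser α β hβ hαβ hn m hx
  · exact Set.mem_Ioi.2 (half_lt_self hx)

lemma iteratedDeriv_Wser (hn : 1 ≤ n) (m : ℕ) :
    ∀ x : ℝ, 0 < x → iteratedDeriv m (Wser α β 0) x = Wser α β m x := by
  induction m with
  | zero => intro x hx; rw [iteratedDeriv_zero]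
  | succ m ih =>
      intro x hx
      rw [iteratedDeriv_succ]
      have hev : iteratedDeriv m (Wser α β 0) =ᶠ[nhds x] Wser α β m := by
        filter_upwards [isOpen_Ioi.mem_nhds (Set.mem_Ioi.2 hx)] with y hy
        exact ih y hy
      rw [hev.deriv_eq, (hasDerivAt_Wser α β hβ hαβ hn m hx).deriv]

lemma Wser_sign (m : ℕ) {x : ℝ} (hx : 0 < x) :
    0 ≤ (-1:ℝ)^m * Wser α β m x := by
  rw [Wser, ← tsum_mul_left]
  exact tsum_nonneg fun k => gser_nonneg_alt α β hβ hαβ m k hx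

noncomputable def gc (k : ℕ) : ℂ → ℂ := fun z =>
  ∑ J : Finset (Fin n), (-1:ℂ)^J.card * (z + k + (sfun α β J : ℂ))⁻¹

lemma gc_ofReal (k : ℕ) (y : ℝ) : gc α β k (y:ℂ) = ((gser α β 0 k y : ℝ) : ℂ) := by
  rw [gc, gser]
  push_cast
  refine Finset.sum_congr rfl fun J _ => ?_
  simp only [pow_zero, Nat.factorial_zero, Nat.cast_one, one_mul, mul_one]
  rw [zpow_neg_one]

lemma gc_ne_base {z : ℂ} {k : ℕ} {c : ℝ} (hc : 0 ≤ c) (hz : 0 < z.re) :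
    z + k + (c : ℂ) ≠ 0 := by
  intro h
  have hre : (z + k + (c : ℂ)).re = z.re + k + c := by
    simp [Complex.add_re, Complex.natCast_re, Complex.ofReal_re]
  rw [h] at hre
  simp only [Complex.zero_re] at hre
  have hk : (0:ℝ) ≤ k := Nat.cast_nonneg k
  linarith

lemma analyticAt_Wser0 (hn : 1 ≤ n) {x : ℝ} (hx : 0 < x) :
    AnalyticAt ℝ (Wser α β 0) x := by
  have hhalf : 0 < x / 2 := half_pos hx
  set t : Set ℂ := {z : ℂ | x/2 < z.re} with ht
  have hopen : IsOpen t := by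
    exact isOpen_lt continuous_const Complex.continuous_re
  have hconv : Convex ℝ t := convex_halfSpace_re_gt (x/2)
  set Wc : ℂ → ℂ := fun z => ∑' k : ℕ, gc α β k z with hWc
  have hdiff : ∀ z ∈ t, DifferentiableAt ℂ Wc z := by
    intro z hz
    have h := hasDerivAt_tsum_of_isPreconnected
      (u := fun k : ℕ => ((Fintype.card (Finset (Fin n)) : ℝ)) * (((x/2) + k) ^ 2)⁻¹)
      (g := fun k => gc α β k)
      (g' := fun k w => ∑ J : Finset (Fin n),
        (-1:ℂ)^J.card * (-((w + k + (sfun α β J : ℂ)) ^ 2)⁻¹))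
      (t := t) (y₀ := (x:ℂ)) (y := z)
      ((summable_sq hhalf).mul_left _) hopen hconv.isPreconnected
      ?_ ?_ ?_ ?_ hz
    · exact h.differentiableAt
    · intro k w hw
      unfold gc
      apply HasDerivAt.fun_sum
      intro J _
      have hs := sfun_nonneg α β hβ hαβ J
      have hne : w + k + (sfun α β J : ℂ) ≠ 0 :=
        gc_ne_base α β hβ hαβ hs (lt_trans hhalf hw)
      have h0 := hasDerivAt_inv (x := w + ((k:ℂ) + (sfun α β J : ℂ)))
        (by rw [← add_assoc]; exact hne)
      have h1 := (h0.comp_add_const w _).const_mul ((-1:ℂ)^J.card)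
      have he : (fun u : ℂ => (-1:ℂ)^J.card * (u + ((k:ℂ) + (sfun α β J : ℂ)))⁻¹)
          = fun u : ℂ => (-1:ℂ)^J.card * (u + k + (sfun α β J : ℂ))⁻¹ := by
        funext u; rw [add_assoc]
      rw [he] at h1
      have hb : w + ((k:ℂ) + (sfun α β J : ℂ)) = w + k + (sfun α β J : ℂ) :=
        (add_assoc _ _ _).symm
      rw [hb] at h1
      exact h1
    · intro k w hw
      have hb : ∀ J : Finset (Fin n),
          ‖(-1:ℂ)^J.card * (-((w + k + (sfun α β J : ℂ)) ^ 2)⁻¹)‖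
            ≤ (((x/2) + k) ^ 2)⁻¹ := by
        intro J
        have hs := sfun_nonneg α β hβ hαβ J
        rw [norm_mul, norm_pow, norm_neg, norm_one, one_pow, one_mul, norm_neg, norm_inv,
          norm_pow]
        have hre : x/2 + k ≤ (w + k + (sfun α β J : ℂ)).re := by
          have : (w + k + (sfun α β J : ℂ)).re = w.re + k + sfun α β J := by
            simp [Complex.add_re, Complex.natCast_re, Complex.ofReal_re]
          rw [this]
          have := le_of_lt (Set.mem_setOf_eq ▸ hw)
          linarith
        have hnorm : x/2 + k ≤ ‖w + k + (sfun α β J : ℂ)‖ := by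
          refine le_trans hre ?_
          exact Complex.re_le_norm _
        apply inv_anti₀ (by positivity)
        apply pow_le_pow_left₀ (by positivity) hnorm
      calc ‖∑ J : Finset (Fin n), (-1:ℂ)^J.card * (-((w + k + (sfun α β J : ℂ)) ^ 2)⁻¹)‖
          ≤ ∑ J : Finset (Fin n),
            ‖(-1:ℂ)^J.card * (-((w + k + (sfun α β J : ℂ)) ^ 2)⁻¹)‖ :=
            norm_sum_le _ _
        _ ≤ ∑ _J : Finset (Fin n), (((x/2) + k) ^ 2)⁻¹ :=
            Finset.sum_le_sum fun J _ => hb J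
        _ = ((Fintype.card (Finset (Fin n)) : ℝ)) * (((x/2) + k) ^ 2)⁻¹ := by
            rw [Finset.sum_const, Finset.card_univ, nsmul_eq_mul]
    · show (x:ℂ) ∈ t
      simp only [ht, Set.mem_setOf_eq, Complex.ofReal_re]
      exact half_lt_self hx
    · apply Summable.of_norm
      have hs0 := (summable_gser α β hβ hαβ hn 0 hx).abs
      refine hs0.congr fun k => ?_
      simp only [gc_ofReal α β hβ hαβ, Complex.norm_real, Real.norm_eq_abs]
  have hAc : AnalyticAt ℂ Wc (x:ℂ) := by
    rw [Complex.analyticAt_iff_eventually_differentiableAt]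
    filter_upwards [hopen.mem_nhds (by
      simp only [ht, Set.mem_setOf_eq, Complex.ofReal_re]; exact half_lt_self hx)] with z hz
    exact hdiff z hz
  have hAr : AnalyticAt ℝ (fun y : ℝ => (Wc (y:ℂ)).re) x := by
    have h1 : AnalyticAt ℝ (fun y : ℝ => ((y:ℝ) : ℂ)) x := Complex.ofRealCLM.analyticAt x
    have h2 : AnalyticAt ℝ Wc ((fun y : ℝ => ((y:ℝ) : ℂ)) x) := hAc.restrictScalars
    have h12 : AnalyticAt ℝ (Wc ∘ (fun y : ℝ => ((y:ℝ) : ℂ))) x := h2.comp h1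
    have h3 : AnalyticAt ℝ (fun z : ℂ => z.re)
        ((Wc ∘ (fun y : ℝ => ((y:ℝ) : ℂ))) x) := Complex.reCLM.analyticAt _
    exact h3.comp h12
  refine hAr.congr ?_
  filter_upwards [isOpen_Ioi.mem_nhds (Set.mem_Ioi.2 hx)] with y hy
  have hsum := summable_gser α β hβ hαβ hn 0 hy
  have h4 : Wc (y:ℂ) = ((Wser α β 0 y : ℝ) : ℂ) := by
    rw [hWc, Wser]
    rw [show ((∑' k : ℕ, gser α β 0 k y : ℝ) : ℂ)
        = ∑' k : ℕ, ((gser α β 0 k y : ℝ) : ℂ) from Complex.ofRealCLM.map_tsum hsum]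
    exact tsum_congr fun k => gc_ofReal α β hβ hαβ k y
  rw [h4, Complex.ofReal_re]

end Series

open MeasureTheory

/-- A function `f` is completely monotonic on `(0,∞)` if it is infinitely
differentiable there and `(-1)^n f^(n)(x) ≥ 0` for all `n ≥ 0` and `x > 0`. -/
def CompletelyMonotonicOn (f : ℝ → ℝ) : Prop :=
  (∀ x > (0 : ℝ), ContDiffAt ℝ (⊤ : ℕ∞) f x) ∧
    ∀ (n : ℕ), ∀ x > (0 : ℝ), 0 ≤ (-1 : ℝ) ^ n * iteratedDeriv n f x

/-- A positive function `f` on `(0,∞)` is logarithmically completely monotonic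
if `-(log f)'` is completely monotonic on `(0,∞)`. -/
def LogCompletelyMonotonic (f : ℝ → ℝ) : Prop :=
  (∀ x > (0 : ℝ), 0 < f x) ∧
    CompletelyMonotonicOn (fun x => -deriv (fun y => Real.log (f y)) x)

theorem stmt0 (n : ℕ) (hn : 1 ≤ n) (α β : Fin n → ℝ)
    (hβ : ∀ i, 0 ≤ β i) (hαβ : ∀ i, β i ≤ α i) :
    LogCompletelyMonotonic (fun x =>
      (∏ J ∈ Finset.univ.filter (fun J : Finset (Fin n) => Even J.card),
        Real.Gamma (x + (∑ i ∈ J, α i + ∑ i ∈ Jᶜ, β i))) /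
      (∏ J ∈ Finset.univ.filter (fun J : Finset (Fin n) => Odd J.card),
        Real.Gamma (x + (∑ i ∈ J, α i + ∑ i ∈ Jᶜ, β i)))) := by
  have hGpos : ∀ y : ℝ, 0 < y → ∀ J : Finset (Fin n),
      0 < Real.Gamma (y + (∑ i ∈ J, α i + ∑ i ∈ Jᶜ, β i)) := by
    intro y hy J
    apply Real.Gamma_pos_of_pos
    have hs := sfun_nonneg α β hβ hαβ J
    rw [sfun] at hs
    linarith
  have hUpos : ∀ y : ℝ, 0 < y →
      0 < (∏ J ∈ Finset.univ.filter (fun J : Finset (Fin n) => Even J.card),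
        Real.Gamma (y + (∑ i ∈ J, α i + ∑ i ∈ Jᶜ, β i))) /
      (∏ J ∈ Finset.univ.filter (fun J : Finset (Fin n) => Odd J.card),
        Real.Gamma (y + (∑ i ∈ J, α i + ∑ i ∈ Jᶜ, β i))) := by
    intro y hy
    apply div_pos <;>
    · apply Finset.prod_pos
      intro J _
      exact hGpos y hy J
  have logU_eq : ∀ y : ℝ, 0 < y →
      Real.log ((∏ J ∈ Finset.univ.filter (fun J : Finset (Fin n) => Even J.card),
        Real.Gamma (y + (∑ i ∈ J, α i + ∑ i ∈ Jᶜ, β i))) /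
      (∏ J ∈ Finset.univ.filter (fun J : Finset (Fin n) => Odd J.card),
        Real.Gamma (y + (∑ i ∈ J, α i + ∑ i ∈ Jᶜ, β i))))
      = ∑ J : Finset (Fin n), (-1:ℝ)^J.card * Real.log (Real.Gamma (y + sfun α β J)) := by
    intro y hy
    rw [Real.log_div
        (Finset.prod_ne_zero_iff.2 fun J _ => (hGpos y hy J).ne')
        (Finset.prod_ne_zero_iff.2 fun J _ => (hGpos y hy J).ne'),
      Real.log_prod (fun J _ => (hGpos y hy J).ne'),
      Real.log_prod (fun J _ => (hGpos y hy J).ne')]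
    have hEvenSum : ∑ J ∈ Finset.univ.filter (fun J : Finset (Fin n) => Even J.card),
        Real.log (Real.Gamma (y + (∑ i ∈ J, α i + ∑ i ∈ Jᶜ, β i)))
        = ∑ J ∈ Finset.univ.filter (fun J : Finset (Fin n) => Even J.card),
          (-1:ℝ)^J.card * Real.log (Real.Gamma (y + sfun α β J)) := by
      refine Finset.sum_congr rfl fun J hJ => ?_
      have hEv : Even J.card := (Finset.mem_filter.1 hJ).2
      rw [hEv.neg_one_pow, one_mul, sfun]
    have hOddSum : ∑ J ∈ Finset.univ.filter (fun J : Finset (Fin n) => Odd J.card),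
        Real.log (Real.Gamma (y + (∑ i ∈ J, α i + ∑ i ∈ Jᶜ, β i)))
        = -∑ J ∈ Finset.univ.filter (fun J : Finset (Fin n) => ¬ Even J.card),
          (-1:ℝ)^J.card * Real.log (Real.Gamma (y + sfun α β J)) := by
      rw [← Finset.sum_neg_distrib]
      refine Finset.sum_congr (Finset.filter_congr fun J _ => ?_) fun J hJ => ?_
      · exact Nat.not_even_iff_odd.symm
      · have hOd : ¬ Even J.card := (Finset.mem_filter.1 hJ).2
        rw [(Nat.not_even_iff_odd.1 hOd).neg_one_pow, sfun]
        ring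
    rw [hEvenSum, hOddSum, sub_neg_eq_add, Finset.sum_filter_add_sum_filter_not]
  have key : ∀ x : ℝ, 0 < x →
      (fun x => -deriv (fun y => Real.log
        ((∏ J ∈ Finset.univ.filter (fun J : Finset (Fin n) => Even J.card),
          Real.Gamma (y + (∑ i ∈ J, α i + ∑ i ∈ Jᶜ, β i))) /
        (∏ J ∈ Finset.univ.filter (fun J : Finset (Fin n) => Odd J.card),
          Real.Gamma (y + (∑ i ∈ J, α i + ∑ i ∈ Jᶜ, β i))))) x) x
      = Wser α β 0 x := by
    intro x hx
    have hder : HasDerivAt (fun y => Real.log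
        ((∏ J ∈ Finset.univ.filter (fun J : Finset (Fin n) => Even J.card),
          Real.Gamma (y + (∑ i ∈ J, α i + ∑ i ∈ Jᶜ, β i))) /
        (∏ J ∈ Finset.univ.filter (fun J : Finset (Fin n) => Odd J.card),
          Real.Gamma (y + (∑ i ∈ J, α i + ∑ i ∈ Jᶜ, β i)))))
        (Vfun α β x) x := by
      refine (Vfun_hasDerivAt α β hβ hαβ hx).congr_of_eventuallyEq ?_
      filter_upwards [isOpen_Ioi.mem_nhds (Set.mem_Ioi.2 hx)] with y hy
      exact logU_eq y hy
    have h1 : Wser α β 0 x = -(Vfun α β x) :=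
      (hasSum_gser0 α β hβ hαβ hn hx).tsum_eq
    simp only [hder.deriv, h1]
  have hev : ∀ x : ℝ, 0 < x →
      (fun x => -deriv (fun y => Real.log
        ((∏ J ∈ Finset.univ.filter (fun J : Finset (Fin n) => Even J.card),
          Real.Gamma (y + (∑ i ∈ J, α i + ∑ i ∈ Jᶜ, β i))) /
        (∏ J ∈ Finset.univ.filter (fun J : Finset (Fin n) => Odd J.card),
          Real.Gamma (y + (∑ i ∈ J, α i + ∑ i ∈ Jᶜ, β i))))) x)
      =ᶠ[nhds x] Wser α β 0 := by
    intro x hx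
    filter_upwards [isOpen_Ioi.mem_nhds (Set.mem_Ioi.2 hx)] with y hy
    exact key y hy
  refine ⟨fun x hx => hUpos x hx, fun x hx => ?_, fun m x hx => ?_⟩
  · exact ((analyticAt_Wser0 α β hβ hαβ hn hx).contDiffAt).congr_of_eventuallyEq (hev x hx)
  · rw [Filter.EventuallyEq.iteratedDeriv_eq m (hev x hx),
      iteratedDeriv_Wser α β hβ hαβ hn m x hx]
    exact Wser_sign α β hβ hαβ m hx
end

section
/- Let p ≥ 1 and let a_1,…,a_p, b_1,…,b_p be nonnegative real numbers. The function U(x) = ∏_{i=1}^p Γ(x+a_i)/Γ(x+b_i) is logarithmically completely monotonic on (0,∞) if and only if v(t) = Σ_{k=1}^p (t^{a_k} − t^{b_k}) ≥ 0 for all t ∈ (0,1]. -/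
open MeasureTheory

open Real Set Filter
open scoped Topology Nat

lemma momInt {s : ℝ} (hs : 0 < s) (n : ℕ) :
    ∫ t in Ioi (0:ℝ), t ^ n * Real.exp (-(s * t)) = n ! / s ^ (n + 1) := by
  have h := Real.integral_rpow_mul_exp_neg_mul_Ioi (a := (n:ℝ)+1) (r := s) (by positivity) hs
  have e1 : ∀ t ∈ Ioi (0:ℝ), t ^ ((n:ℝ) + 1 - 1) * Real.exp (-(s*t)) = t ^ n * Real.exp (-(s*t)) := by
    intro t ht
    rw [add_sub_cancel_right, Real.rpow_natCast]
  rw [setIntegral_congr_fun measurableSet_Ioi e1] at h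
  rw [h, Real.Gamma_nat_eq_factorial]
  have : ((n:ℝ) + 1) = ((n+1 : ℕ) : ℝ) := by push_cast; ring
  rw [this, Real.rpow_natCast, div_pow, one_pow]
  ring

lemma momIntegrable {s : ℝ} (hs : 0 < s) (n : ℕ) :
    IntegrableOn (fun t => t ^ n * Real.exp (-(s * t))) (Ioi (0:ℝ)) := by
  have h := integrableOn_rpow_mul_exp_neg_mul_rpow (p := 1) (s := (n:ℝ)) (b := s)
    (lt_of_lt_of_le neg_one_lt_zero (Nat.cast_nonneg n)) one_pos hs
  refine h.congr_fun (fun t ht => ?_) measurableSet_Ioi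
  beta_reduce
  rw [Real.rpow_one, Real.rpow_natCast]
  ring_nf


noncomputable def Phi (h : ℝ → ℝ) (n : ℕ) (x : ℝ) : ℝ :=
  ∫ t in Ioi (0:ℝ), t ^ n * h t * Real.exp (-(x * t))



noncomputable def PhiC (h : ℝ → ℝ) (z : ℂ) : ℂ :=
  ∫ t in Ioi (0:ℝ), (h t : ℂ) * Complex.exp (-(z * t))



section
variable {h : ℝ → ℝ} {M : ℝ}
  (hcont : ContinuousOn h (Ioi 0))
  (hM : ∀ t ∈ Ioi (0:ℝ), |h t| ≤ M * (1 + t))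


include hcont hM in
lemma PhiIntegrable {x : ℝ} (hx : 0 < x) (n : ℕ) :
    IntegrableOn (fun t => t ^ n * h t * Real.exp (-(x * t))) (Ioi (0:ℝ)) := by
  have hmeas : AEStronglyMeasurable (fun t => t ^ n * h t * Real.exp (-(x * t)))
      (volume.restrict (Ioi (0:ℝ))) := by
    refine AEStronglyMeasurable.mul (AEStronglyMeasurable.mul ?_ ?_) ?_
    · exact (continuous_pow n).aestronglyMeasurable.restrict
    · exact hcont.aestronglyMeasurable measurableSet_Ioi
    · exact (Real.continuous_exp.comp (by continuity)).aestronglyMeasurable.restrict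
  refine Integrable.mono' (g := fun t => M * (t ^ n * Real.exp (-(x*t))) + M * (t ^ (n+1) * Real.exp (-(x*t)))) ?_ hmeas ?_
  · exact ((momIntegrable hx n).const_mul M).add ((momIntegrable hx (n+1)).const_mul M)
  · filter_upwards [ae_restrict_mem measurableSet_Ioi] with t ht
    have ht0 : 0 < t := ht
    have h1 : |h t| ≤ M * (1 + t) := hM t ht
    have : ‖t ^ n * h t * Real.exp (-(x * t))‖ = t ^ n * |h t| * Real.exp (-(x*t)) := by
      rw [Real.norm_eq_abs, abs_mul, abs_mul, abs_pow, abs_of_pos ht0, Real.abs_exp]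
    rw [this]
    have hexp : (0:ℝ) < Real.exp (-(x*t)) := Real.exp_pos _
    have step1 : t ^ n * |h t| * Real.exp (-(x*t)) ≤ t ^ n * (M*(1+t)) * Real.exp (-(x*t)) := by
      apply mul_le_mul_of_nonneg_right _ hexp.le
      exact mul_le_mul_of_nonneg_left h1 (pow_pos ht0 n).le
    refine step1.trans (le_of_eq ?_)
    rw [pow_succ t n]; ring

include hcont hM in
lemma PhiDeriv {x : ℝ} (hx : 0 < x) (n : ℕ) :
    HasDerivAt (Phi h n) (-Phi h (n+1) x) x := by
  have key := hasDerivAt_integral_of_dominated_loc_of_deriv_le (μ := volume.restrict (Ioi (0:ℝ)))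
    (F := fun y t => t ^ n * h t * Real.exp (-(y * t)))
    (F' := fun y t => -(t ^ (n+1) * h t * Real.exp (-(y * t))))
    (x₀ := x) (s := Metric.ball x (x/2)) (bound := fun t => M * (t ^ (n+1) * Real.exp (-(x/2*t))) + M * (t ^ (n+2) * Real.exp (-(x/2*t))))
    (Metric.ball_mem_nhds x (half_pos hx)) ?_ ?_ ?_ ?_ ?_ ?_
  · have : (∫ t in Ioi (0:ℝ), -(t ^ (n+1) * h t * Real.exp (-(x * t)))) = -Phi h (n+1) x := by
      rw [integral_neg]; rfl
    rw [← this]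
    exact key.2
  · filter_upwards with y
    refine AEStronglyMeasurable.mul (AEStronglyMeasurable.mul ?_ ?_) ?_
    · exact (continuous_pow n).aestronglyMeasurable.restrict
    · exact hcont.aestronglyMeasurable measurableSet_Ioi
    · exact (Real.continuous_exp.comp (by continuity)).aestronglyMeasurable.restrict
  · exact PhiIntegrable hcont hM hx n
  · refine AEStronglyMeasurable.neg ?_
    refine AEStronglyMeasurable.mul (AEStronglyMeasurable.mul ?_ ?_) ?_
    · exact (continuous_pow (n+1)).aestronglyMeasurable.restrict
    · exact hcont.aestronglyMeasurable measurableSet_Ioi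
    · exact (Real.continuous_exp.comp (by continuity)).aestronglyMeasurable.restrict
  · filter_upwards [ae_restrict_mem measurableSet_Ioi] with t ht y hy
    have ht0 : 0 < t := ht
    have hyx : x/2 ≤ y := by
      have := abs_lt.1 (mem_ball_iff_norm.1 hy)
      linarith [this.1]
    have hexple : Real.exp (-(y*t)) ≤ Real.exp (-(x/2*t)) := by
      apply Real.exp_le_exp.2
      nlinarith
    have h1 : |h t| ≤ M * (1 + t) := hM t ht
    have : ‖-(t ^ (n+1) * h t * Real.exp (-(y * t)))‖ = t ^ (n+1) * |h t| * Real.exp (-(y*t)) := by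
      rw [norm_neg, Real.norm_eq_abs, abs_mul, abs_mul, abs_pow, abs_of_pos ht0, Real.abs_exp]
    rw [this]
    have hexp : (0:ℝ) < Real.exp (-(y*t)) := Real.exp_pos _
    have hexp2 : (0:ℝ) < Real.exp (-(x/2*t)) := Real.exp_pos _
    have hpow : (0:ℝ) < t ^ (n+1) := pow_pos ht0 _
    have step1 : t ^ (n+1) * |h t| * Real.exp (-(y*t)) ≤ t ^ (n+1) * (M*(1+t)) * Real.exp (-(x/2*t)) := by
      apply mul_le_mul
      · exact mul_le_mul_of_nonneg_left h1 hpow.le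
      · exact hexple
      · exact hexp.le
      · exact mul_nonneg hpow.le ((abs_nonneg _).trans h1)
    refine step1.trans ?_
    have : t ^ (n+1) * (M*(1+t)) * Real.exp (-(x/2*t))
        = M * (t ^ (n+1) * Real.exp (-(x/2*t))) + M * (t ^ (n+2) * Real.exp (-(x/2*t))) := by
      rw [pow_succ t (n+1)]; ring
    rw [this]
  · exact ((momIntegrable (half_pos hx) (n+1)).const_mul M).add ((momIntegrable (half_pos hx) (n+2)).const_mul M)
  · filter_upwards [ae_restrict_mem measurableSet_Ioi] with t ht y hy
    have : HasDerivAt (fun y => Real.exp (-(y * t))) (-t * Real.exp (-(y*t))) y := by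
      have h1 : HasDerivAt (fun y : ℝ => -(y * t)) (-t) y := by
        simpa using ((hasDerivAt_id y).mul_const t).fun_neg
      convert h1.exp using 1; ring
    have h2 := this.const_mul (t ^ n * h t)
    convert h2 using 1
    · rfl
    rw [pow_succ]; ring


include hcont hM in
lemma PhiIterated (n : ℕ) : ∀ x ∈ Ioi (0:ℝ),
    iteratedDeriv n (Phi h 0) x = (-1)^n * Phi h n x := by
  induction n with
  | zero => intro x _; simp
  | succ n ih =>
    intro x hx
    rw [iteratedDeriv_succ]
    have hev : iteratedDeriv n (Phi h 0) =ᶠ[𝓝 x] fun y => (-1)^n * Phi h n y := by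
      filter_upwards [Ioi_mem_nhds hx] with y hy using ih y hy
    rw [hev.deriv_eq]
    have := ((PhiDeriv hcont hM hx n).const_mul ((-1:ℝ)^n)).deriv
    rw [this]
    ring

include hcont hM in
lemma PhiC_real {x : ℝ} (hx : 0 < x) : PhiC h x = ((Phi h 0 x : ℝ) : ℂ) := by
  rw [Phi, PhiC,
    show ((∫ t in Ioi (0:ℝ), t ^ 0 * h t * Real.exp (-(x * t)) : ℝ) : ℂ)
      = ∫ t in Ioi (0:ℝ), ((t ^ 0 * h t * Real.exp (-(x * t)) : ℝ) : ℂ) from integral_ofReal.symm]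
  refine setIntegral_congr_fun measurableSet_Ioi (fun t ht => ?_)
  push_cast [Complex.ofReal_exp]
  ring

include hcont hM in
lemma PhiC_diff : DifferentiableOn ℂ (PhiC h) {z | 0 < z.re} := by
  intro z₀ hz₀
  have hz₀' : 0 < z₀.re := hz₀
  have key := hasDerivAt_integral_of_dominated_loc_of_deriv_le (μ := volume.restrict (Ioi (0:ℝ)))
    (F := fun z t => (h t : ℂ) * Complex.exp (-(z * t)))
    (F' := fun z t => (h t : ℂ) * Complex.exp (-(z * t)) * (-(t:ℂ)))
    (x₀ := z₀) (s := Metric.ball z₀ (z₀.re/2))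
    (bound := fun t => M * (t ^ 1 * Real.exp (-(z₀.re/2*t))) + M * (t ^ 2 * Real.exp (-(z₀.re/2*t))))
    (Metric.ball_mem_nhds z₀ (half_pos hz₀')) ?_ ?_ ?_ ?_ ?_ ?_
  · exact (key.2.differentiableAt).differentiableWithinAt
  · filter_upwards with z
    refine AEStronglyMeasurable.mul ?_ ?_
    · exact (Complex.continuous_ofReal.comp_continuousOn hcont).aestronglyMeasurable measurableSet_Ioi
    · exact (Complex.continuous_exp.comp (by continuity)).aestronglyMeasurable.restrict
  · -- integrability of F z₀
    refine Integrable.mono' (g := fun t => M * (t ^ 0 * Real.exp (-(z₀.re*t))) + M * (t ^ 1 * Real.exp (-(z₀.re*t)))) ?_ ?_ ?_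
    · exact ((momIntegrable hz₀' 0).const_mul M).add ((momIntegrable hz₀' 1).const_mul M)
    · refine AEStronglyMeasurable.mul ?_ ?_
      · exact (Complex.continuous_ofReal.comp_continuousOn hcont).aestronglyMeasurable measurableSet_Ioi
      · exact (Complex.continuous_exp.comp (by continuity)).aestronglyMeasurable.restrict
    · filter_upwards [ae_restrict_mem measurableSet_Ioi] with t ht
      have ht0 : 0 < t := ht
      have hb : |h t| ≤ M * (1+t) := hM t ht
      have hnorm : ‖(h t : ℂ) * Complex.exp (-(z₀ * t))‖ = |h t| * Real.exp (-(z₀.re * t)) := by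
        simp only [norm_mul, Complex.norm_real, Real.norm_eq_abs]
        rw [Complex.norm_exp]
        congr 2
        simp [Complex.mul_re]
      rw [hnorm]
      calc |h t| * Real.exp (-(z₀.re * t)) ≤ (M*(1+t)) * Real.exp (-(z₀.re*t)) :=
            mul_le_mul_of_nonneg_right hb (Real.exp_pos _).le
        _ = M * (t ^ 0 * Real.exp (-(z₀.re*t))) + M * (t ^ 1 * Real.exp (-(z₀.re*t))) := by ring
  · refine AEStronglyMeasurable.mul (AEStronglyMeasurable.mul ?_ ?_) ?_
    · exact (Complex.continuous_ofReal.comp_continuousOn hcont).aestronglyMeasurable measurableSet_Ioi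
    · exact (Complex.continuous_exp.comp (by continuity)).aestronglyMeasurable.restrict
    · exact (Complex.continuous_ofReal.comp continuous_id).neg.aestronglyMeasurable.restrict
  · filter_upwards [ae_restrict_mem measurableSet_Ioi] with t ht z hz
    have ht0 : 0 < t := ht
    have hre : z₀.re/2 ≤ z.re := by
      have h1 : |z.re - z₀.re| ≤ ‖z - z₀‖ := by
        rw [← Complex.sub_re]; exact Complex.abs_re_le_norm _
      have h2 : ‖z - z₀‖ < z₀.re/2 := mem_ball_iff_norm.1 hz
      have := abs_le.1 h1
      linarith [this.1]
    have hnorm : ‖(h t : ℂ) * Complex.exp (-(z * t)) * (-(t:ℂ))‖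
        = |h t| * Real.exp (-(z.re * t)) * t := by
      simp only [norm_mul, norm_neg, Complex.norm_real, Real.norm_eq_abs]
      rw [Complex.norm_exp]
      congr 2
      · congr 1
        simp [Complex.mul_re]
      · exact abs_of_pos ht0
    rw [hnorm]
    have hb : |h t| ≤ M * (1+t) := hM t ht
    have hexple : Real.exp (-(z.re*t)) ≤ Real.exp (-(z₀.re/2*t)) := by
      apply Real.exp_le_exp.2; nlinarith
    have h0 : (0:ℝ) ≤ M * (1+t) := le_trans (abs_nonneg _) hb
    calc |h t| * Real.exp (-(z.re * t)) * t
        ≤ (M*(1+t)) * Real.exp (-(z₀.re/2*t)) * t := by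
          apply mul_le_mul _ le_rfl ht0.le (by positivity)
          exact mul_le_mul hb hexple (Real.exp_pos _).le h0
      _ = M * (t ^ 1 * Real.exp (-(z₀.re/2*t))) + M * (t ^ 2 * Real.exp (-(z₀.re/2*t))) := by
          ring
  · exact ((momIntegrable (half_pos hz₀') 1).const_mul M).add ((momIntegrable (half_pos hz₀') 2).const_mul M)
  · filter_upwards [ae_restrict_mem measurableSet_Ioi] with t ht z hz
    have h1 : HasDerivAt (fun z : ℂ => -(z * t)) (-(t:ℂ)) z := by
      simpa using ((hasDerivAt_id z).mul_const (t:ℂ)).fun_neg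
    have := h1.cexp.const_mul (h t : ℂ)
    convert this using 1
    · rfl
    ring

include hcont hM in
lemma Phi_analytic {x : ℝ} (hx : 0 < x) : AnalyticAt ℝ (Phi h 0) x := by
  have hopen : IsOpen {z : ℂ | 0 < z.re} := isOpen_lt continuous_const Complex.continuous_re
  have hA : AnalyticAt ℂ (PhiC h) (x : ℂ) :=
    (PhiC_diff hcont hM).analyticOnNhd hopen _ (by simpa using hx)
  have hR : AnalyticAt ℝ (PhiC h) (x : ℂ) := hA.restrictScalars
  have hof : AnalyticAt ℝ (fun y : ℝ => (y : ℂ)) x := Complex.ofRealCLM.analyticAt x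
  have hcomp : AnalyticAt ℝ (fun y : ℝ => PhiC h (y : ℂ)) x := hR.comp hof
  have hre : AnalyticAt ℝ (fun y : ℝ => (PhiC h (y : ℂ)).re) x :=
    (Complex.reCLM.analyticAt _).comp hcomp
  refine hre.congr ?_
  filter_upwards [Ioi_mem_nhds hx] with y hy
  rw [PhiC_real hcont hM hy]
  simp


-- auxiliary limit
lemma natShiftLim (c : ℝ) : Tendsto (fun n : ℕ => ((n:ℝ)+c)/n) atTop (𝓝 1) := by
  have : Tendsto (fun n : ℕ => 1 + c * (1/(n:ℝ))) atTop (𝓝 (1 + c * 0)) :=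
    tendsto_const_nhds.add (tendsto_const_nhds.mul tendsto_one_div_atTop_nhds_zero_nat)
  rw [mul_zero, add_zero] at this
  refine this.congr' ?_
  filter_upwards [eventually_ge_atTop 1] with n hn
  have hn0 : (n:ℝ) ≠ 0 := Nat.cast_ne_zero.2 (by omega)
  field_simp

set_option maxHeartbeats 2000000 in
include hcont hM in
lemma postPos (hpos : ∀ n : ℕ, ∀ x : ℝ, 0 < x → 0 ≤ Phi h n x)
    {t₀ : ℝ} (ht₀ : 0 < t₀) : 0 ≤ h t₀ := by
  by_contra hneg
  push_neg at hneg
  set ε : ℝ := -(h t₀) / 2 with hε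
  have hεpos : 0 < ε := by simp [hε]; linarith
  -- continuity at t₀
  have hct : ContinuousAt h t₀ := hcont.continuousAt (Ioi_mem_nhds ht₀)
  obtain ⟨δ, hδpos, hδ⟩ := Metric.continuousAt_iff.1 hct ε hεpos
  set C : ℝ := |h t₀| with hC
  set K : ℝ := M + C with hK
  have hC0 : 0 ≤ C := abs_nonneg _
  have hM0 : 0 ≤ M := by
    have := hM (1) (by norm_num)
    nlinarith [abs_nonneg (h 1)]
  -- coefficients
  set β₀ : ℝ := ε + K * t₀^2 / δ^2 with hβ₀
  set β₁ : ℝ := (M*t₀^2 - 2*K*t₀) / δ^2 with hβ₁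
  set β₂ : ℝ := (K - 2*M*t₀) / δ^2 with hβ₂
  set β₃ : ℝ := M / δ^2 with hβ₃
  -- the error sequence
  set E : ℕ → ℝ := fun n => β₀ + β₁ * (t₀ * (((n:ℝ)+1)/n))
      + β₂ * (t₀^2 * (((n:ℝ)+1)/n) * (((n:ℝ)+2)/n))
      + β₃ * (t₀^3 * (((n:ℝ)+1)/n) * (((n:ℝ)+2)/n) * (((n:ℝ)+3)/n)) with hE
  have hlim : Tendsto E atTop (𝓝 ε) := by
    have l1 := natShiftLim 1
    have l2 := natShiftLim 2
    have l3 := natShiftLim 3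
    have : Tendsto E atTop (𝓝 (β₀ + β₁ * (t₀ * 1) + β₂ * (t₀^2 * 1 * 1) + β₃ * (t₀^3 * 1 * 1 * 1))) := by
      apply Tendsto.add
      apply Tendsto.add
      apply Tendsto.add
      · exact tendsto_const_nhds
      · exact tendsto_const_nhds.mul (tendsto_const_nhds.mul l1)
      · exact tendsto_const_nhds.mul ((tendsto_const_nhds.mul l1).mul l2)
      · exact tendsto_const_nhds.mul (((tendsto_const_nhds.mul l1).mul l2).mul l3)
    convert this using 2
    have hδ0 : δ ≠ 0 := ne_of_gt hδpos
    field_simp [hβ₀, hβ₁, hβ₂, hβ₃]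
    ring
  -- main inequality : for n ≥ 1, -E n ≤ h t₀
  have hmain : ∀ n : ℕ, 1 ≤ n → -(E n) ≤ h t₀ := by
    intro n hn
    have hn0 : (0:ℝ) < n := by exact_mod_cast hn
    set s : ℝ := n / t₀ with hs
    have hspos : 0 < s := div_pos hn0 ht₀
    set c : ℝ := s^(n+1) / n ! with hc
    have hcpos : 0 < c := by positivity
    -- pointwise bound
    have hptw : ∀ t ∈ Ioi (0:ℝ), |h t - h t₀| ≤ ε + ((t - t₀)/δ)^2 * (K + M*t) := by
      intro t ht
      have ht0 : (0:ℝ) < t := ht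
      have hKM : 0 ≤ K + M*t := by
        have := hM t ht
        have : 0 ≤ M * (1+t) := le_trans (abs_nonneg _) this
        rw [hK]; nlinarith
      rcases lt_or_ge (dist t t₀) δ with hlt | hge
      · have := le_of_lt (hδ hlt)
        rw [Real.dist_eq] at this
        have h2 : 0 ≤ ((t - t₀)/δ)^2 * (K + M*t) := mul_nonneg (sq_nonneg _) hKM
        linarith
      · have h1 : |h t - h t₀| ≤ K + M*t := by
          have hb := hM t ht
          calc |h t - h t₀| ≤ |h t| + |h t₀| := abs_sub _ _
            _ ≤ M * (1+t) + C := by rw [hC]; linarith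
            _ = K + M*t := by rw [hK]; ring
        have h2 : 1 ≤ ((t - t₀)/δ)^2 := by
          rw [Real.dist_eq] at hge
          rw [div_pow, le_div_iff₀ (by positivity)]
          have : δ ≤ |t - t₀| := hge
          nlinarith [abs_nonneg (t - t₀), sq_abs (t - t₀)]
        nlinarith
    -- integrability facts
    have hint_h : IntegrableOn (fun t => t ^ n * h t * Real.exp (-(s * t))) (Ioi (0:ℝ)) :=
      PhiIntegrable hcont hM hspos n
    have habs_cont : ContinuousOn (fun t => |h t - h t₀|) (Ioi (0:ℝ)) :=
      (hcont.sub continuousOn_const).abs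
    have habs_bd : ∀ t ∈ Ioi (0:ℝ), |(|h t - h t₀|)| ≤ K * (1 + t) := by
      intro t ht
      rw [abs_abs (h t - h t₀)]
      calc |h t - h t₀| ≤ |h t| + |h t₀| := abs_sub _ _
        _ ≤ M * (1+t) + C := by rw [hC]; linarith [hM t ht]
        _ ≤ K * (1+t) := by rw [hK]; nlinarith [(mem_Ioi.1 ht).le.trans' le_rfl, mem_Ioi.1 ht]
    have hint_abs : IntegrableOn (fun t => t ^ n * |h t - h t₀| * Real.exp (-(s * t))) (Ioi (0:ℝ)) :=
      PhiIntegrable habs_cont habs_bd hspos n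
    -- RHS integrand as sum of four moment functions
    have hrhs_int : IntegrableOn (fun t =>
        β₀ * (t ^ n * Real.exp (-(s*t))) + β₁ * (t ^ (n+1) * Real.exp (-(s*t)))
        + β₂ * (t ^ (n+2) * Real.exp (-(s*t))) + β₃ * (t ^ (n+3) * Real.exp (-(s*t)))) (Ioi (0:ℝ)) := by
      exact ((((momIntegrable hspos n).const_mul β₀).add
        ((momIntegrable hspos (n+1)).const_mul β₁)).add
        ((momIntegrable hspos (n+2)).const_mul β₂)).add
        ((momIntegrable hspos (n+3)).const_mul β₃)
    -- pointwise : t^n |h t - h t₀| e ≤ RHS integrand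
    have hptw2 : ∀ t ∈ Ioi (0:ℝ), t ^ n * |h t - h t₀| * Real.exp (-(s * t)) ≤
        β₀ * (t ^ n * Real.exp (-(s*t))) + β₁ * (t ^ (n+1) * Real.exp (-(s*t)))
        + β₂ * (t ^ (n+2) * Real.exp (-(s*t))) + β₃ * (t ^ (n+3) * Real.exp (-(s*t))) := by
      intro t ht
      have ht0 : (0:ℝ) < t := ht
      have hb := hptw t ht
      have hpw : (0:ℝ) < t ^ n := pow_pos ht0 n
      have hex : (0:ℝ) < Real.exp (-(s*t)) := Real.exp_pos _
      have key : t ^ n * |h t - h t₀| * Real.exp (-(s*t)) ≤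
          t ^ n * (ε + ((t - t₀)/δ)^2 * (K + M*t)) * Real.exp (-(s*t)) := by
        apply mul_le_mul_of_nonneg_right _ hex.le
        exact mul_le_mul_of_nonneg_left hb hpw.le
      refine key.trans (le_of_eq ?_)
      have hδ0 : δ ≠ 0 := ne_of_gt hδpos
      rw [hβ₀, hβ₁, hβ₂, hβ₃]
      rw [pow_succ t (n+1+1), pow_succ t (n+1), pow_succ t n]
      field_simp
      ring
    -- the integral inequality
    have hIle : (∫ t in Ioi (0:ℝ), t ^ n * |h t - h t₀| * Real.exp (-(s * t))) ≤
        β₀ * (↑n ! / s ^ (n+1)) + β₁ * (↑(n+1)! / s ^ (n+2)) + β₂ * (↑(n+2)! / s ^ (n+3))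
        + β₃ * (↑(n+3)! / s ^ (n+4)) := by
      have step := setIntegral_mono_on hint_abs hrhs_int measurableSet_Ioi hptw2
      refine step.trans (le_of_eq ?_)
      have i0 : IntegrableOn (fun t => β₀ * (t ^ n * Real.exp (-(s*t)))) (Ioi (0:ℝ)) :=
        (momIntegrable hspos n).const_mul β₀
      have i1 : IntegrableOn (fun t => β₁ * (t ^ (n+1) * Real.exp (-(s*t)))) (Ioi (0:ℝ)) :=
        (momIntegrable hspos (n+1)).const_mul β₁
      have i2 : IntegrableOn (fun t => β₂ * (t ^ (n+2) * Real.exp (-(s*t)))) (Ioi (0:ℝ)) :=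
        (momIntegrable hspos (n+2)).const_mul β₂
      have i3 : IntegrableOn (fun t => β₃ * (t ^ (n+3) * Real.exp (-(s*t)))) (Ioi (0:ℝ)) :=
        (momIntegrable hspos (n+3)).const_mul β₃
      have i01 : IntegrableOn (fun t => β₀ * (t ^ n * Real.exp (-(s*t)))
          + β₁ * (t ^ (n+1) * Real.exp (-(s*t)))) (Ioi (0:ℝ)) := i0.add i1
      have i012 : IntegrableOn (fun t => β₀ * (t ^ n * Real.exp (-(s*t)))
          + β₁ * (t ^ (n+1) * Real.exp (-(s*t))) + β₂ * (t ^ (n+2) * Real.exp (-(s*t)))) (Ioi (0:ℝ)) :=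
        i01.add i2
      rw [integral_add i012 i3, integral_add i01 i2, integral_add i0 i1,
        integral_const_mul, integral_const_mul, integral_const_mul, integral_const_mul,
        momInt hspos n, momInt hspos (n+1), momInt hspos (n+2), momInt hspos (n+3)]
    -- h t₀ = c * Phi h n s - c * D
    have hmom := momInt hspos n
    have hsplit : (∫ t in Ioi (0:ℝ), t ^ n * (h t - h t₀) * Real.exp (-(s * t)))
        = Phi h n s - h t₀ * (↑n ! / s ^ (n+1)) := by
      have e1 : ∀ t ∈ Ioi (0:ℝ), t ^ n * (h t - h t₀) * Real.exp (-(s * t))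
          = t ^ n * h t * Real.exp (-(s * t)) - h t₀ * (t ^ n * Real.exp (-(s * t))) := by
        intro t _; ring
      rw [setIntegral_congr_fun measurableSet_Ioi e1,
        integral_sub hint_h ((momIntegrable hspos n).const_mul (h t₀)),
        integral_const_mul, momInt hspos n]
      rfl
    have hD_abs : |∫ t in Ioi (0:ℝ), t ^ n * (h t - h t₀) * Real.exp (-(s * t))|
        ≤ ∫ t in Ioi (0:ℝ), t ^ n * |h t - h t₀| * Real.exp (-(s * t)) := by
      have := norm_integral_le_integral_norm (μ := volume.restrict (Ioi (0:ℝ)))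
        (f := fun t => t ^ n * (h t - h t₀) * Real.exp (-(s * t)))
      rw [Real.norm_eq_abs] at this
      refine this.trans (le_of_eq ?_)
      refine setIntegral_congr_fun measurableSet_Ioi (fun t ht => ?_)
      have ht0 : (0:ℝ) < t := ht
      rw [Real.norm_eq_abs, abs_mul, abs_mul, abs_pow, abs_of_pos ht0, Real.abs_exp]
    -- crucial identity : c * (n!/s^(n+1)) = 1
    have hfac : (0:ℝ) < (n ! : ℝ) := by exact_mod_cast Nat.factorial_pos n
    have hcn : c * (↑n ! / s ^ (n+1)) = 1 := by
      rw [hc]; field_simp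
    -- now : h t₀ = c * Phi h n s - c * D ≥ - c * D ≥ -c * |D| ≥ -c * (bound)
    have hPhi := hpos n s hspos
    have hid : h t₀ = c * Phi h n s - c * (∫ t in Ioi (0:ℝ), t ^ n * (h t - h t₀) * Real.exp (-(s * t))) := by
      linear_combination c * hsplit - h t₀ * hcn
    -- assemble
    have hge : h t₀ ≥ -(c * (β₀ * (↑n ! / s ^ (n+1)) + β₁ * (↑(n+1)! / s ^ (n+2))
        + β₂ * (↑(n+2)! / s ^ (n+3)) + β₃ * (↑(n+3)! / s ^ (n+4)))) := by
      have h1 : c * (∫ t in Ioi (0:ℝ), t ^ n * (h t - h t₀) * Real.exp (-(s * t)))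
          ≤ c * (β₀ * (↑n ! / s ^ (n+1)) + β₁ * (↑(n+1)! / s ^ (n+2))
            + β₂ * (↑(n+2)! / s ^ (n+3)) + β₃ * (↑(n+3)! / s ^ (n+4))) := by
        apply mul_le_mul_of_nonneg_left _ hcpos.le
        exact (le_abs_self _).trans (hD_abs.trans hIle)
      nlinarith [mul_nonneg hcpos.le hPhi]
    -- identify with E n
    have hEeq : c * (β₀ * (↑n ! / s ^ (n+1)) + β₁ * (↑(n+1)! / s ^ (n+2))
        + β₂ * (↑(n+2)! / s ^ (n+3)) + β₃ * (↑(n+3)! / s ^ (n+4))) = E n := by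
      have hs0 : s ≠ 0 := ne_of_gt hspos
      have hf1 : ((n+1)! : ℝ) = ((n:ℝ)+1) * n ! := by
        rw [Nat.factorial_succ]; push_cast; ring
      have hf2 : ((n+2)! : ℝ) = ((n:ℝ)+2) * (((n:ℝ)+1) * n !) := by
        rw [show n+2 = (n+1)+1 from rfl, Nat.factorial_succ, Nat.factorial_succ]; push_cast; ring
      have hf3 : ((n+3)! : ℝ) = ((n:ℝ)+3) * (((n:ℝ)+2) * (((n:ℝ)+1) * n !)) := by
        rw [show n+3 = ((n+1)+1)+1 from rfl, Nat.factorial_succ, Nat.factorial_succ, Nat.factorial_succ]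
        push_cast; ring
      have hsn : s = n / t₀ := hs
      have hn0' : (n:ℝ) ≠ 0 := ne_of_gt hn0
      have ht0' : t₀ ≠ 0 := ne_of_gt ht₀
      have e2 : s ^ (n+2) = s ^ (n+1) * s := pow_succ _ _
      have e3 : s ^ (n+3) = s ^ (n+1) * s * s := by ring
      have e4 : s ^ (n+4) = s ^ (n+1) * s * s * s := by ring
      have ht : t₀ = n / s := by rw [hsn]; field_simp
      rw [hE, hc, hf1, hf2, hf3, e2, e3, e4, ht]
      field_simp
    rw [hEeq] at hge
    linarith
  -- conclude : h t₀ ≥ -ε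
  have hfin : -(h t₀) ≤ ε := by
    have : Tendsto (fun n => -(E n)) atTop (𝓝 (-ε)) := hlim.neg
    have hle : -(h t₀) ≤ ε := by
      have h2 : ∀ᶠ n in atTop, -(E n) ≤ h t₀ := by
        filter_upwards [eventually_ge_atTop 1] with n hn using hmain n hn
      have := le_of_tendsto this h2
      linarith
    exact hle
  rw [hε] at hfin
  linarith

end


-- single exponential integral
lemma expInt {s : ℝ} (hs : 0 < s) : ∫ t in Ioi (0:ℝ), Real.exp (-(s * t)) = 1 / s := by
  have := momInt hs 0
  simp only [pow_zero, one_mul, zero_add, pow_one, Nat.factorial_zero, Nat.cast_one] at this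
  exact this

lemma expIntegrable {s : ℝ} (hs : 0 < s) :
    IntegrableOn (fun t => Real.exp (-(s * t))) (Ioi (0:ℝ)) := by
  have := momIntegrable hs 0
  simpa using this

lemma exp_diff_abs_le {a b t : ℝ} (ha : 0 ≤ a) (hb : 0 ≤ b) (ht : 0 ≤ t) :
    |Real.exp (-(a*t)) - Real.exp (-(b*t))| ≤ |a - b| * t := by
  have key : ∀ c d : ℝ, 0 ≤ c → 0 ≤ d → d ≤ c →
      Real.exp (-(d*t)) - Real.exp (-(c*t)) ≤ (c - d) * t := by
    intro c d hc hd hdc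
    have h1 : Real.exp (-(d*t)) - Real.exp (-(c*t))
        = Real.exp (-(d*t)) * (1 - Real.exp (-((c-d)*t))) := by
      rw [mul_sub, mul_one, ← Real.exp_add]
      ring_nf
    rw [h1]
    have h2 : Real.exp (-(d*t)) ≤ 1 := Real.exp_le_one_iff.2 (by nlinarith)
    have h3 : 1 - Real.exp (-((c-d)*t)) ≤ (c-d)*t := by
      have := Real.add_one_le_exp (-((c-d)*t))
      linarith
    have h4 : 0 ≤ 1 - Real.exp (-((c-d)*t)) := by
      have : Real.exp (-((c-d)*t)) ≤ 1 := Real.exp_le_one_iff.2 (by nlinarith)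
      linarith
    nlinarith
  rcases le_total a b with hab | hab
  · have h5 : Real.exp (-(b*t)) ≤ Real.exp (-(a*t)) := Real.exp_le_exp.2 (by nlinarith)
    rw [abs_of_nonneg (by linarith), abs_sub_comm, abs_of_nonneg (by linarith)]
    exact key b a hb ha hab
  · have h5 : Real.exp (-(a*t)) ≤ Real.exp (-(b*t)) := Real.exp_le_exp.2 (by nlinarith)
    rw [abs_of_nonpos (by linarith), abs_of_nonneg (by linarith)]
    have := key a b ha hb hab
    linarith



section
variable {p : ℕ} (a b : Fin p → ℝ) (ha : ∀ i, 0 ≤ a i) (hb : ∀ i, 0 ≤ b i)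


noncomputable def uu (a b : Fin p → ℝ) : ℝ → ℝ :=
  fun t => ∑ i, (Real.exp (-(a i * t)) - Real.exp (-(b i * t)))

noncomputable def hh (a b : Fin p → ℝ) : ℝ → ℝ :=
  fun t => uu a b t / (1 - Real.exp (-t))

lemma one_sub_exp_pos {t : ℝ} (ht : 0 < t) : 0 < 1 - Real.exp (-t) := by
  have : Real.exp (-t) < 1 := Real.exp_lt_one_iff.2 (by linarith)
  linarith

include ha hb in
lemma uu_abs_le {t : ℝ} (ht : 0 ≤ t) : |uu a b t| ≤ (∑ i, |a i - b i|) * t := by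
  rw [uu, Finset.sum_mul]
  refine (Finset.abs_sum_le_sum_abs _ _).trans (Finset.sum_le_sum fun i _ => ?_)
  exact exp_diff_abs_le (ha i) (hb i) ht

lemma uu_cont : Continuous (uu a b) := by
  refine continuous_finset_sum _ fun i _ => Continuous.sub ?_ ?_ <;>
    exact Real.continuous_exp.comp (by continuity)

lemma hh_cont : ContinuousOn (hh a b) (Ioi 0) := by
  apply ContinuousOn.div ((uu_cont a b).continuousOn)
  · exact (Continuous.sub continuous_const (Real.continuous_exp.comp continuous_neg)).continuousOn
  · intro t ht
    exact ne_of_gt (one_sub_exp_pos ht)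

include ha hb in
lemma hh_abs_le : ∀ t ∈ Ioi (0:ℝ), |hh a b t| ≤ (∑ i, |a i - b i|) * (1 + t) := by
  intro t ht
  have ht0 : (0:ℝ) < t := ht
  have hd := one_sub_exp_pos ht0
  have hM0 : 0 ≤ ∑ i, |a i - b i| := Finset.sum_nonneg fun i _ => abs_nonneg _
  rw [hh, abs_div, abs_of_pos hd, div_le_iff₀ hd]
  have h1 : |uu a b t| ≤ (∑ i, |a i - b i|) * t := uu_abs_le a b ha hb ht0.le
  refine h1.trans ?_
  have h2 : t ≤ (1 + t) * (1 - Real.exp (-t)) := by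
    have := Real.add_one_le_exp t
    have he : Real.exp (-t) = (Real.exp t)⁻¹ := by rw [← Real.exp_neg]
    have hexp : 0 < Real.exp t := Real.exp_pos t
    rw [he]
    rw [mul_sub, mul_one]
    have : (1+t) * (Real.exp t)⁻¹ ≤ 1 := by
      rw [mul_inv_le_iff₀ hexp, one_mul]
      linarith
    linarith
  calc (∑ i, |a i - b i|) * t ≤ (∑ i, |a i - b i|) * ((1+t) * (1 - Real.exp (-t))) :=
        mul_le_mul_of_nonneg_left h2 hM0
    _ = (∑ i, |a i - b i|) * (1+t) * (1 - Real.exp (-t)) := by ring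

-- geometric expansion
lemma geom_expand {t : ℝ} (ht : 0 < t) (x : ℝ) :
    ∑' m : ℕ, uu a b t * Real.exp (-((x + m) * t)) = hh a b t * Real.exp (-(x * t)) := by
  have he : ∀ m : ℕ, Real.exp (-((x + m) * t)) = Real.exp (-(x*t)) * Real.exp (-t) ^ m := by
    intro m
    rw [← Real.exp_nat_mul, ← Real.exp_add]
    ring_nf
  have h1 : ∀ m : ℕ, uu a b t * Real.exp (-((x + m) * t))
      = (uu a b t * Real.exp (-(x*t))) * Real.exp (-t) ^ m := by
    intro m; rw [he m]; ring
  rw [tsum_congr h1, tsum_mul_left, tsum_geometric_of_lt_one (Real.exp_pos _).le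
    (Real.exp_lt_one_iff.2 (by linarith))]
  rw [hh]
  field_simp [ne_of_gt (one_sub_exp_pos ht)]

include ha hb in
lemma perIntegrable {s : ℝ} (hs : 0 < s) :
    IntegrableOn (fun t => uu a b t * Real.exp (-(s * t))) (Ioi (0:ℝ)) := by
  have : ∀ t : ℝ, uu a b t * Real.exp (-(s*t))
      = ∑ i, (Real.exp (-((s + a i) * t)) - Real.exp (-((s + b i) * t))) := by
    intro t
    rw [uu, Finset.sum_mul]
    refine Finset.sum_congr rfl fun i _ => ?_
    rw [sub_mul, ← Real.exp_add, ← Real.exp_add]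
    ring_nf
  have hint : IntegrableOn
      (fun t => ∑ i, (Real.exp (-((s + a i) * t)) - Real.exp (-((s + b i) * t)))) (Ioi (0:ℝ)) :=
    integrable_finset_sum _ fun i _ => (expIntegrable (by linarith [ha i] : 0 < s + a i)).sub
      (expIntegrable (by linarith [hb i] : 0 < s + b i))
  exact hint.congr (Eventually.of_forall fun t => (this t).symm)

include ha hb in
lemma perInt {s : ℝ} (hs : 0 < s) :
    ∫ t in Ioi (0:ℝ), uu a b t * Real.exp (-(s * t))
      = ∑ i, (1/(s + a i) - 1/(s + b i)) := by
  have hfun : ∀ t : ℝ, uu a b t * Real.exp (-(s*t))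
      = ∑ i, (Real.exp (-((s + a i) * t)) - Real.exp (-((s + b i) * t))) := by
    intro t
    rw [uu, Finset.sum_mul]
    refine Finset.sum_congr rfl fun i _ => ?_
    rw [sub_mul, ← Real.exp_add, ← Real.exp_add]
    ring_nf
  have hint : ∀ i : Fin p, Integrable
      (fun t => Real.exp (-((s + a i) * t)) - Real.exp (-((s + b i) * t)))
      (volume.restrict (Ioi (0:ℝ))) := fun i =>
    (expIntegrable (by linarith [ha i] : 0 < s + a i)).sub
      (expIntegrable (by linarith [hb i] : 0 < s + b i))
  rw [integral_congr_ae (Eventually.of_forall hfun),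
    integral_finset_sum _ (fun i _ => hint i)]
  refine Finset.sum_congr rfl fun i _ => ?_
  rw [integral_sub (expIntegrable (by linarith [ha i] : 0 < s + a i))
      (expIntegrable (by linarith [hb i] : 0 < s + b i)),
    expInt (by linarith [ha i] : 0 < s + a i), expInt (by linarith [hb i] : 0 < s + b i)]

include ha hb in
lemma PhiEq {x : ℝ} (hx : 0 < x) :
    Phi (hh a b) 0 x = ∑' m : ℕ, ∑ i, (1/(x + m + a i) - 1/(x + m + b i)) := by
  have hxm : ∀ m : ℕ, (0:ℝ) < x + m := fun m => by positivity
  have key : Phi (hh a b) 0 x = ∑' m : ℕ, ∫ t in Ioi (0:ℝ), uu a b t * Real.exp (-((x + m) * t)) := by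
    rw [Phi]
    have e1 : ∀ t ∈ Ioi (0:ℝ), t ^ 0 * hh a b t * Real.exp (-(x * t))
        = ∑' m : ℕ, uu a b t * Real.exp (-((x + m) * t)) := by
      intro t ht
      rw [geom_expand a b ht x, pow_zero, one_mul]
    rw [setIntegral_congr_fun measurableSet_Ioi e1]
    refine (integral_tsum_of_summable_integral_norm (fun m => perIntegrable a b ha hb (hxm m)) ?_).symm
    have hbound : ∀ m : ℕ, (∫ t in Ioi (0:ℝ), ‖uu a b t * Real.exp (-((x + m) * t))‖)
        ≤ (∑ i, |a i - b i|) * (1/(x + m)^2) := by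
      intro m
      have h1 : ∀ t ∈ Ioi (0:ℝ), ‖uu a b t * Real.exp (-((x + m) * t))‖
          ≤ (∑ i, |a i - b i|) * (t ^ 1 * Real.exp (-((x + m) * t))) := by
        intro t ht
        have ht0 : (0:ℝ) < t := ht
        rw [Real.norm_eq_abs, abs_mul, Real.abs_exp, pow_one]
        have := uu_abs_le a b ha hb ht0.le
        calc |uu a b t| * Real.exp (-((x+m)*t))
            ≤ ((∑ i, |a i - b i|) * t) * Real.exp (-((x+m)*t)) :=
              mul_le_mul_of_nonneg_right this (Real.exp_pos _).le
          _ = (∑ i, |a i - b i|) * (t * Real.exp (-((x+m)*t))) := by ring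
      have h2 := setIntegral_mono_on
        ((perIntegrable a b ha hb (hxm m)).norm)
        ((momIntegrable (hxm m) 1).const_mul (∑ i, |a i - b i|))
        measurableSet_Ioi h1
      refine h2.trans (le_of_eq ?_)
      rw [integral_const_mul, momInt (hxm m) 1]
      norm_num
    refine Summable.of_nonneg_of_le (fun m => integral_nonneg fun t => norm_nonneg _) hbound ?_
    apply Summable.mul_left
    have hs : Summable (fun m : ℕ => 1/|(m:ℝ) + x|^(2:ℝ)) :=
      (Real.summable_one_div_nat_add_rpow x 2).2 (by norm_num)
    refine hs.congr fun m => ?_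
    rw [abs_of_pos (by positivity : (0:ℝ) < (m:ℝ) + x)]
    rw [show ((m:ℝ) + x) ^ (2:ℝ) = ((m:ℝ) + x) ^ (2:ℕ) from Real.rpow_natCast _ 2]
    rw [add_comm (m:ℝ) x]
  rw [key]
  refine tsum_congr fun m => ?_
  rw [perInt a b ha hb (hxm m)]


include ha hb in
lemma logU_hasDeriv {x₀ : ℝ} (hx₀ : 0 < x₀) :
    HasDerivAt (fun y => Real.log (∏ i, Real.Gamma (y + a i) / Real.Gamma (y + b i)))
      (-(Phi (hh a b) 0 x₀)) x₀ := by
  set s : Set ℝ := Ioi (x₀/2) with hsdef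
  have hsopen : IsOpen s := isOpen_Ioi
  have hx₀s : x₀ ∈ s := by simp [hsdef]; linarith
  set w : ℕ → ℝ → ℝ := fun m x => ∑ i, (1/(x + b i + m) - 1/(x + a i + m)) with hw
  -- uniform convergence of partial sums of w
  have hbound : ∀ (m : ℕ) (x : ℝ), x ∈ s → ‖w m x‖ ≤ (∑ i, |a i - b i|) * (1/(x₀/2 + m)^2) := by
    intro m x hx
    have hx2 : x₀/2 < x := hx
    have hden : (0:ℝ) < x₀/2 + m := by positivity
    rw [hw, Real.norm_eq_abs]
    calc |∑ i, (1/(x + b i + m) - 1/(x + a i + m))|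
        ≤ ∑ i, |1/(x + b i + m) - 1/(x + a i + m)| := Finset.abs_sum_le_sum_abs _ _
      _ ≤ ∑ i, |a i - b i| * (1/(x₀/2 + m)^2) := by
          refine Finset.sum_le_sum fun i _ => ?_
          have hai : (0:ℝ) < x + a i + m := by have := ha i; linarith [hx2, hx₀]
          have hbi : (0:ℝ) < x + b i + m := by have := hb i; linarith [hx2, hx₀]
          have heq : 1/(x + b i + m) - 1/(x + a i + m)
              = (a i - b i) / ((x + a i + m) * (x + b i + m)) := by
            rw [one_div, one_div, inv_sub_inv hbi.ne' hai.ne', mul_comm]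
            congr 1
            ring
          rw [heq, abs_div, abs_of_pos (mul_pos hai hbi)]
          rw [div_eq_mul_one_div]
          refine mul_le_mul_of_nonneg_left ?_ (abs_nonneg _)
          rw [div_le_div_iff₀ (by positivity) (by positivity), one_mul, one_mul]
          have h1 : x₀/2 + m ≤ x + a i + m := by have := ha i; linarith
          have h2 : x₀/2 + m ≤ x + b i + m := by have := hb i; linarith
          nlinarith
      _ = (∑ i, |a i - b i|) * (1/(x₀/2 + m)^2) := by rw [Finset.sum_mul]
  have hsummable : Summable (fun m : ℕ => (∑ i, |a i - b i|) * (1/(x₀/2 + m)^2)) := by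
    apply Summable.mul_left
    have hs : Summable (fun m : ℕ => 1/|(m:ℝ) + x₀/2|^(2:ℝ)) :=
      (Real.summable_one_div_nat_add_rpow (x₀/2) 2).2 (by norm_num)
    refine hs.congr fun m => ?_
    rw [abs_of_pos (by positivity : (0:ℝ) < (m:ℝ) + x₀/2),
      show ((m:ℝ) + x₀/2) ^ (2:ℝ) = ((m:ℝ) + x₀/2) ^ (2:ℕ) from Real.rpow_natCast _ 2,
      add_comm (m:ℝ) (x₀/2)]
  have hT : TendstoUniformlyOn (fun N x => ∑ m ∈ Finset.range N, w m x)
      (fun x => ∑' m, w m x) atTop s := tendstoUniformlyOn_tsum_nat hsummable hbound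
  have hunif : TendstoUniformlyOn (fun N x => ∑ m ∈ Finset.range (N+1), w m x)
      (fun x => ∑' m, w m x) atTop s := by
    intro u hu
    exact (tendsto_add_atTop_nat 1).eventually (hT u hu)
  -- derivatives of the approximants
  have hderiv : ∀ N : ℕ, ∀ x ∈ s, HasDerivAt
      (fun y => ∑ i, (Real.BohrMollerup.logGammaSeq (y + a i) N
        - Real.BohrMollerup.logGammaSeq (y + b i) N))
      (∑ m ∈ Finset.range (N+1), w m x) x := by
    intro N x hx
    have hx2 : x₀/2 < x := hx
    have hxpos : 0 < x := lt_trans (by linarith) hx2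
    have hc : ∀ c : ℝ, 0 ≤ c → HasDerivAt (fun y => Real.BohrMollerup.logGammaSeq (y + c) N)
        (Real.log N - ∑ m ∈ Finset.range (N+1), 1/(x + c + m)) x := by
      intro c hc0
      have h1 : HasDerivAt (fun y : ℝ => (y + c) * Real.log N) (Real.log N) x := by
        simpa using ((hasDerivAt_id x).add_const c).mul_const (Real.log N)
      have h2 : HasDerivAt (fun y : ℝ => ∑ m ∈ Finset.range (N+1), Real.log (y + c + m))
          (∑ m ∈ Finset.range (N+1), 1/(x + c + m)) x := by
        apply HasDerivAt.fun_sum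
        intro m _
        have hbase : HasDerivAt (fun y : ℝ => y + c + m) 1 x :=
          ((hasDerivAt_id x).add_const c).add_const (m:ℝ)
        have hne : x + c + m ≠ 0 := by positivity
        simpa using hbase.log hne
      have h3 := (h1.add_const (Real.log (N ! : ℝ))).sub h2
      convert h3 using 1
      · rfl
      · rfl
      funext y; rfl
    have hsum := HasDerivAt.fun_sum (u := Finset.univ)
      (A := fun i x => Real.BohrMollerup.logGammaSeq (x + a i) N
        - Real.BohrMollerup.logGammaSeq (x + b i) N)
      (fun i _ => (hc (a i) (ha i)).sub (hc (b i) (hb i)))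
    convert hsum using 1
    · rfl
    · rfl
    simp only [hw]
    rw [Finset.sum_comm]
    refine Finset.sum_congr rfl fun i _ => ?_
    rw [Finset.sum_sub_distrib]
    ring
  -- pointwise convergence to log U
  have hfg : ∀ x ∈ s, Tendsto
      (fun N => ∑ i, (Real.BohrMollerup.logGammaSeq (x + a i) N
        - Real.BohrMollerup.logGammaSeq (x + b i) N)) atTop
      (𝓝 (Real.log (∏ i, Real.Gamma (x + a i) / Real.Gamma (x + b i)))) := by
    intro x hx
    have hx2 : x₀/2 < x := hx
    have hxpos : 0 < x := lt_trans (by linarith) hx2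
    have hU : Real.log (∏ i, Real.Gamma (x + a i) / Real.Gamma (x + b i))
        = ∑ i, (Real.log (Real.Gamma (x + a i)) - Real.log (Real.Gamma (x + b i))) := by
      rw [Real.log_prod]
      · refine Finset.sum_congr rfl fun i _ => ?_
        rw [Real.log_div (Real.Gamma_pos_of_pos (by linarith [ha i])).ne'
          (Real.Gamma_pos_of_pos (by linarith [hb i])).ne']
      · intro i _
        exact div_ne_zero (Real.Gamma_pos_of_pos (by linarith [ha i])).ne'
          (Real.Gamma_pos_of_pos (by linarith [hb i])).ne'
    rw [hU]
    exact tendsto_finset_sum _ fun i _ =>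
      (Real.BohrMollerup.tendsto_log_gamma (by linarith [ha i])).sub
        (Real.BohrMollerup.tendsto_log_gamma (by linarith [hb i]))
  have hmain := hasDerivAt_of_tendstoUniformlyOn hsopen hunif
    (Eventually.of_forall hderiv) hfg hx₀s
  have hfinal : (∑' m, w m x₀) = -(Phi (hh a b) 0 x₀) := by
    rw [PhiEq a b ha hb hx₀, ← tsum_neg]
    refine tsum_congr fun m => ?_
    rw [hw, ← Finset.sum_neg_distrib]
    refine Finset.sum_congr rfl fun i _ => ?_
    have e1 : x₀ + b i + m = x₀ + m + b i := by ring
    have e2 : x₀ + a i + m = x₀ + m + a i := by ring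
    rw [e1, e2]
    ring
  rwa [hfinal] at hmain


end

theorem stmt2 (p : ℕ) (hp : 1 ≤ p) (a b : Fin p → ℝ)
    (ha : ∀ i, 0 ≤ a i) (hb : ∀ i, 0 ≤ b i) :
    LogCompletelyMonotonic (fun x => ∏ i, Real.Gamma (x + a i) / Real.Gamma (x + b i)) ↔
      ∀ t ∈ Set.Ioc (0 : ℝ) 1, 0 ≤ ∑ k, (t ^ a k - t ^ b k) := by
  set U : ℝ → ℝ := fun x => ∏ i, Real.Gamma (x + a i) / Real.Gamma (x + b i) with hU
  set g : ℝ → ℝ := fun x => -deriv (fun y => Real.log (U y)) x with hg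
  set M : ℝ := ∑ i, |a i - b i| with hMdef
  have hcont := hh_cont a b
  have hMb := hh_abs_le a b ha hb
  have hUpos : ∀ x > (0:ℝ), 0 < U x := by
    intro x hx
    exact Finset.prod_pos fun i _ => div_pos (Real.Gamma_pos_of_pos (by linarith [ha i]))
      (Real.Gamma_pos_of_pos (by linarith [hb i]))
  have hgeq : ∀ x ∈ Ioi (0:ℝ), g x = Phi (hh a b) 0 x := by
    intro x hx
    have := (logU_hasDeriv a b ha hb hx).deriv
    rw [hg]
    simp only [hU] at this ⊢
    rw [this]
    ring
  have hgev : ∀ x ∈ Ioi (0:ℝ), g =ᶠ[𝓝 x] Phi (hh a b) 0 := by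
    intro x hx
    filter_upwards [Ioi_mem_nhds hx] with y hy using hgeq y hy
  have hiter : ∀ (n : ℕ), ∀ x ∈ Ioi (0:ℝ),
      (-1:ℝ)^n * iteratedDeriv n g x = Phi (hh a b) n x := by
    intro n x hx
    rw [(hgev x hx).iteratedDeriv_eq n, PhiIterated hcont hMb n x hx, ← mul_assoc,
      ← mul_pow]
    norm_num
  constructor
  · rintro ⟨-, -, hsign⟩ t ht
    obtain ⟨ht0, ht1⟩ := ht
    have hPhiPos : ∀ (n : ℕ) (x : ℝ), 0 < x → 0 ≤ Phi (hh a b) n x := by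
      intro n x hx
      rw [← hiter n x hx]
      exact hsign n x hx
    rcases eq_or_lt_of_le ht1 with h1 | h1
    · subst h1
      simp [Real.one_rpow]
    · set t₀ : ℝ := -Real.log t with ht₀def
      have hlt : Real.log t < 0 := Real.log_neg ht0 h1
      have ht₀pos : 0 < t₀ := by simp [ht₀def]; linarith
      have hhh := postPos hcont hMb hPhiPos ht₀pos
      have hexp : Real.exp (-t₀) = t := by
        rw [ht₀def, neg_neg, Real.exp_log ht0]
      have huu : uu a b t₀ = ∑ k, (t ^ a k - t ^ b k) := by
        rw [uu]
        refine Finset.sum_congr rfl fun k _ => ?_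
        rw [← hexp, Real.rpow_def_of_pos (Real.exp_pos _), Real.log_exp,
          Real.rpow_def_of_pos (Real.exp_pos _), Real.log_exp]
        ring_nf
      have hden : 0 < 1 - Real.exp (-t₀) := one_sub_exp_pos ht₀pos
      have : 0 ≤ uu a b t₀ := by
        have : uu a b t₀ = hh a b t₀ * (1 - Real.exp (-t₀)) := by
          rw [hh]; field_simp
        rw [this]
        exact mul_nonneg hhh hden.le
      rwa [huu] at this
  · intro hv
    have hhpos : ∀ t ∈ Ioi (0:ℝ), 0 ≤ hh a b t := by
      intro t ht
      have ht0 : (0:ℝ) < t := ht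
      have hden := one_sub_exp_pos ht0
      have hmem : Real.exp (-t) ∈ Set.Ioc (0:ℝ) 1 :=
        ⟨Real.exp_pos _, Real.exp_le_one_iff.2 (by linarith)⟩
      have huu : uu a b t = ∑ k, ((Real.exp (-t)) ^ (a k) - (Real.exp (-t)) ^ (b k)) := by
        rw [uu]
        refine Finset.sum_congr rfl fun k _ => ?_
        rw [Real.rpow_def_of_pos (Real.exp_pos _), Real.log_exp,
          Real.rpow_def_of_pos (Real.exp_pos _), Real.log_exp]
        ring_nf
      have h0 : 0 ≤ uu a b t := by
        rw [huu]
        simpa using hv (Real.exp (-t)) hmem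
      exact div_nonneg h0 hden.le
    have hPhiPos : ∀ (n : ℕ) (x : ℝ), 0 < x → 0 ≤ Phi (hh a b) n x := by
      intro n x hx
      refine setIntegral_nonneg measurableSet_Ioi fun t ht => ?_
      have ht0 : (0:ℝ) < t := ht
      exact mul_nonneg (mul_nonneg (pow_nonneg ht0.le n) (hhpos t ht)) (Real.exp_pos _).le
    refine ⟨hUpos, ?_, ?_⟩
    · intro x hx
      have hA := Phi_analytic hcont hMb hx
      have : AnalyticAt ℝ g x := hA.congr (hgev x hx).symm
      exact this.contDiffAt
    · intro n x hx
      rw [hiter n x hx]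
      exact hPhiPos n x hx
end

section
/- Let a_1, a_2, b_1, b_2 be nonnegative real numbers. Then v(t) = t^{a_1} + t^{a_2} − t^{b_1} − t^{b_2} ≥ 0 for all t ∈ (0,1] if and only if min(a_1,a_2) ≤ min(b_1,b_2) and a_1 + a_2 ≤ b_1 + b_2. -/
/-!
For `0 < t ≤ 1` the map `x ↦ t ^ x` is convex and antitone, and for such an `f` the two
conditions already give `f b₁ + f b₂ ≤ f a₁ + f a₂`: spreading a pair apart at fixed sum and
lowering its entries both increase the sum of values. Conversely, as `t → 0` the smallest
exponents dominate, which forces the condition on the minima, while `v` attains its minimum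
`v 1 = 0` over `(0, 1]` at the right endpoint, so `v' 1 = a₁ + a₂ - b₁ - b₂ ≤ 0`.
-/

open Set

namespace ConvexOn

variable {f : ℝ → ℝ}

theorem map_add_map_le_of_add_eq (hf : ConvexOn ℝ univ f) {x y z w : ℝ}
    (hxy : x ≤ y) (hyw : y ≤ w) (h : y + z = x + w) : f y + f z ≤ f x + f w := by
  rcases hxy.eq_or_lt with rfl | hxy
  · rw [show z = w by linarith]
  have hxw : 0 < w - x := by linarith
  set θ := (w - y) / (w - x)
  have hθ : 0 ≤ θ := div_nonneg (by linarith) hxw.le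
  have hθ' : 0 ≤ 1 - θ := by
    rw [sub_nonneg, div_le_one hxw]; linarith
  have hy : θ • x + (1 - θ) • w = y := by
    simp only [θ, smul_eq_mul]; field_simp; ring
  have hz : (1 - θ) • x + θ • w = z := by
    rw [show z = x + w - y by linarith]; simp only [θ, smul_eq_mul]; field_simp; ring
  have h₁ := hf.2 (mem_univ x) (mem_univ w) hθ hθ' (by ring)
  have h₂ := hf.2 (mem_univ x) (mem_univ w) hθ' hθ (by ring)
  rw [hy] at h₁
  rw [hz] at h₂
  simp only [smul_eq_mul] at h₁ h₂
  linarith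

theorem map_add_map_le_of_le_of_add_le (hf : ConvexOn ℝ univ f) (hf' : Antitone f)
    {a A b B : ℝ} (hab : a ≤ b) (hbB : b ≤ B) (hsum : a + A ≤ b + B) :
    f b + f B ≤ f a + f A := by
  rcases le_total A B with hAB | hBA
  · linarith [hf' hab, hf' hAB]
  · -- spread `b ≤ B` out to `b + B - A ≤ A` keeping the sum, then lower the left point to `a`
    have hspread := hf.map_add_map_le_of_add_eq (z := B) (show b + B - A ≤ b by linarith)
      (hbB.trans hBA) (by ring)
    linarith [hf' (show a ≤ b + B - A by linarith)]

theorem map_add_map_le_of_min_le_of_add_le (hf : ConvexOn ℝ univ f) (hf' : Antitone f)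
    {a₁ a₂ b₁ b₂ : ℝ} (hmin : min a₁ a₂ ≤ min b₁ b₂) (hsum : a₁ + a₂ ≤ b₁ + b₂) :
    f b₁ + f b₂ ≤ f a₁ + f a₂ := by
  have hsort (x y : ℝ) : f x + f y = f (min x y) + f (max x y) := by
    rcases le_total x y with h | h <;> simp [h, add_comm]
  rw [hsort a₁, hsort b₁]
  rw [← min_add_max a₁ a₂, ← min_add_max b₁ b₂] at hsum
  exact hf.map_add_map_le_of_le_of_add_le hf' hmin min_le_max hsum

end ConvexOn

theorem IsMinOn.hasDerivAt_nonpos_of_Ioc {f : ℝ → ℝ} {f' a b : ℝ} (hab : a < b)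
    (h : IsMinOn f (Ioc a b) b) (hf : HasDerivAt f f' b) : f' ≤ 0 := by
  have hseg : segment ℝ b ((a + b) / 2) ⊆ Ioc a b := by
    rw [segment_symm, segment_eq_Icc (by linarith)]
    exact Icc_subset_Ioc (by linarith) le_rfl
  have := h.localize.hasFDerivWithinAt_nonneg hf.hasFDerivAt.hasFDerivWithinAt
    (sub_mem_posTangentConeAt_of_segment_subset hseg)
  simp only [ContinuousLinearMap.toSpanSingleton_apply, smul_eq_mul] at this
  nlinarith

namespace Real

variable {a₁ a₂ b₁ b₂ : ℝ}

theorem exists_mem_Ioc_rpow_eq {c s : ℝ} (hc : 0 < c) (hs₀ : 0 < s) (hs₁ : s ≤ 1) :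
    ∃ t ∈ Ioc (0 : ℝ) 1, t ^ c = s :=
  ⟨s ^ c⁻¹, ⟨by positivity, rpow_le_one hs₀.le hs₁ (by positivity)⟩,
    by rw [← rpow_mul hs₀.le, inv_mul_cancel₀ hc.ne', rpow_one]⟩

theorem min_le_min_of_forall_rpow_nonneg
    (hv : ∀ t ∈ Ioc (0 : ℝ) 1, 0 ≤ t ^ a₁ + t ^ a₂ - t ^ b₁ - t ^ b₂) :
    min a₁ a₂ ≤ min b₁ b₂ := by
  by_contra! hlt
  -- at such a `t`, `2 * t ^ min a₁ a₂ < t ^ min b₁ b₂`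
  obtain ⟨t, ⟨ht₀, ht₁⟩, htc⟩ :=
    exists_mem_Ioc_rpow_eq (s := 1 / 3) (sub_pos.2 hlt) (by norm_num) (by norm_num)
  have hanti := antitone_rpow_of_base_le_one ht₀ ht₁
  have hb : t ^ min b₁ b₂ ≤ t ^ b₁ + t ^ b₂ := by
    rw [hanti.map_min]
    exact max_le (by linarith [rpow_pos_of_pos ht₀ b₂]) (by linarith [rpow_pos_of_pos ht₀ b₁])
  have ha : t ^ a₁ + t ^ a₂ ≤ 2 * t ^ min a₁ a₂ := by
    rw [hanti.map_min]
    linarith [le_max_left (t ^ a₁) (t ^ a₂), le_max_right (t ^ a₁) (t ^ a₂)]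
  have hsplit : t ^ min a₁ a₂ = t ^ min b₁ b₂ * (1 / 3) := by
    rw [← htc, ← rpow_add ht₀]; ring_nf
  linarith [hv t ⟨ht₀, ht₁⟩, rpow_pos_of_pos ht₀ (min b₁ b₂)]

theorem add_le_add_of_forall_rpow_nonneg
    (hv : ∀ t ∈ Ioc (0 : ℝ) 1, 0 ≤ t ^ a₁ + t ^ a₂ - t ^ b₁ - t ^ b₂) :
    a₁ + a₂ ≤ b₁ + b₂ := by
  set v : ℝ → ℝ := fun t ↦ t ^ a₁ + t ^ a₂ - t ^ b₁ - t ^ b₂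
  have hmin : IsMinOn v (Ioc 0 1) 1 := fun t ht ↦ by
    simpa [v] using hv t ht
  have hderiv : HasDerivAt v (a₁ + a₂ - b₁ - b₂) 1 := by
    have hpow (p : ℝ) := hasDerivAt_rpow_const (x := 1) (p := p) (Or.inl one_ne_zero)
    have h := (((hpow a₁).add (hpow a₂)).sub (hpow b₁)).sub (hpow b₂)
    simp only [one_rpow, mul_one] at h
    exact h
  linarith [hmin.hasDerivAt_nonpos_of_Ioc zero_lt_one hderiv]

end Real

theorem stmt3_general (a₁ a₂ b₁ b₂ : ℝ) :
    (∀ t ∈ Set.Ioc (0 : ℝ) 1, 0 ≤ t ^ a₁ + t ^ a₂ - t ^ b₁ - t ^ b₂) ↔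
      (min a₁ a₂ ≤ min b₁ b₂ ∧ a₁ + a₂ ≤ b₁ + b₂) := by
  refine ⟨fun hv ↦ ⟨Real.min_le_min_of_forall_rpow_nonneg hv,
    Real.add_le_add_of_forall_rpow_nonneg hv⟩, ?_⟩
  rintro ⟨hmin, hsum⟩ t ⟨ht₀, ht₁⟩
  have := (convexOn_rpow_left ht₀).map_add_map_le_of_min_le_of_add_le
    (Real.antitone_rpow_of_base_le_one ht₀ ht₁) hmin hsum
  linarith

theorem stmt3 (a₁ a₂ b₁ b₂ : ℝ) (ha₁ : 0 ≤ a₁) (ha₂ : 0 ≤ a₂)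
    (hb₁ : 0 ≤ b₁) (hb₂ : 0 ≤ b₂) :
    (∀ t ∈ Set.Ioc (0 : ℝ) 1, 0 ≤ t ^ a₁ + t ^ a₂ - t ^ b₁ - t ^ b₂) ↔
      (min a₁ a₂ ≤ min b₁ b₂ ∧ a₁ + a₂ ≤ b₁ + b₂) :=
  stmt3_general a₁ a₂ b₁ b₂
end

section
/- Let p, q ≥ 1, let A_1,…,A_p, B_1,…,B_q be strictly positive and a_1,…,a_p, b_1,…,b_q be nonnegative reals, and set P(u) = Σ_{i=1}^p e^{−a_i u/A_i}/(1 − e^{−u/A_i}) − Σ_{j=1}^q e^{−b_j u/B_j}/(1 − e^{−u/B_j}) for u > 0. If Σ_{j=1}^q B_j = Σ_{i=1}^p A_i and max_{1≤i≤p}(a_i/A_i) ≤ min_{1≤j≤q}((b_j − 1)/B_j), then P(u) ≥ 0 for all u > 0. -/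
lemma aux_pos10 (A aa u M : ℝ) (hA : 0 < A) (hu : 0 < u) (hle : aa / A ≤ M) :
    Real.exp (-(M * u)) * A / u ≤ Real.exp (-aa * u / A) / (1 - Real.exp (-u / A)) := by
  have hx : 0 < u / A := div_pos hu hA
  have h1 : 0 < 1 - Real.exp (-u / A) := by
    have : Real.exp (-u / A) < 1 := by
      rw [Real.exp_lt_one_iff]
      rw [neg_div]; linarith
    linarith
  have hden : 1 - Real.exp (-u / A) ≤ u / A := by
    have := Real.add_one_le_exp (-(u / A))
    rw [neg_div]; linarith
  have hnum : Real.exp (-(M * u)) ≤ Real.exp (-aa * u / A) := by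
    apply Real.exp_le_exp.2
    have h := mul_le_mul_of_nonneg_right hle hu.le
    have : aa / A * u = -aa * u / A * (-1) := by ring
    nlinarith
  calc Real.exp (-(M * u)) * A / u = Real.exp (-(M * u)) / (u / A) := by
        rw [div_div_eq_mul_div]
    _ ≤ Real.exp (-aa * u / A) / (1 - Real.exp (-u / A)) :=
        div_le_div₀ (Real.exp_nonneg _) hnum h1 hden

lemma aux_neg10 (B bb u M : ℝ) (hB : 0 < B) (hu : 0 < u) (hle : M ≤ (bb - 1) / B) :
    Real.exp (-bb * u / B) / (1 - Real.exp (-u / B)) ≤ Real.exp (-(M * u)) * B / u := by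
  have hx : 0 < u / B := div_pos hu hB
  have h1 : 0 < 1 - Real.exp (-u / B) := by
    have : Real.exp (-u / B) < 1 := by
      rw [Real.exp_lt_one_iff]
      rw [neg_div]; linarith
    linarith
  rw [div_le_div_iff₀ h1 hu]
  have key1 : Real.exp (-bb * u / B) * u ≤ Real.exp (-(M * u)) * Real.exp (-(u / B)) * u := by
    apply mul_le_mul_of_nonneg_right _ hu.le
    rw [← Real.exp_add]
    apply Real.exp_le_exp.2
    have h := mul_le_mul_of_nonneg_right hle hu.le
    have h2 : (bb - 1) / B * u = bb * u / B - u / B := by ring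
    have h3 : -bb * u / B = -(bb * u / B) := by ring
    linarith
  have key2 : Real.exp (-(M * u)) * Real.exp (-(u / B)) * u ≤
      Real.exp (-(M * u)) * B * (1 - Real.exp (-u / B)) := by
    have e1 : (Real.exp (u / B) - 1) * Real.exp (-(u / B)) = 1 - Real.exp (-(u / B)) := by
      rw [sub_mul, ← Real.exp_add]; simp
    have e2 : (u / B) * Real.exp (-(u / B)) ≤ (Real.exp (u / B) - 1) * Real.exp (-(u / B)) := by
      apply mul_le_mul_of_nonneg_right _ (Real.exp_nonneg _)
      have := Real.add_one_le_exp (u / B)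
      linarith
    have e3 : Real.exp (-(u / B)) * u ≤ B * (1 - Real.exp (-(u / B))) := by
      have hu' : u = (u / B) * B := by field_simp
      nlinarith
    have e4 : (-u / B) = -(u / B) := by rw [neg_div]
    rw [e4, mul_assoc, mul_assoc]
    exact mul_le_mul_of_nonneg_left e3 (Real.exp_nonneg _)
  linarith

theorem stmt10 (p q : ℕ) (hp : 1 ≤ p) (hq : 1 ≤ q)
    (A : Fin p → ℝ) (B : Fin q → ℝ) (a : Fin p → ℝ) (b : Fin q → ℝ)
    (hA : ∀ i, 0 < A i) (hB : ∀ j, 0 < B j)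
    (ha : ∀ i, 0 ≤ a i) (hb : ∀ j, 0 ≤ b j)
    (P : ℝ → ℝ)
    (hP : ∀ u, P u = (∑ i, Real.exp (-a i * u / A i) / (1 - Real.exp (-u / A i))) -
      ∑ j, Real.exp (-b j * u / B j) / (1 - Real.exp (-u / B j)))
    (hsum : ∑ j, B j = ∑ i, A i)
    (hmaxmin : ∀ i j, a i / A i ≤ (b j - 1) / B j) :
    ∀ u > (0 : ℝ), 0 ≤ P u := by
  intro u hu
  have : Nonempty (Fin p) := ⟨⟨0, hp⟩⟩
  have hpne : (Finset.univ : Finset (Fin p)).Nonempty := Finset.univ_nonempty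
  set M := Finset.univ.sup' hpne (fun i => a i / A i) with hMdef
  have hM1 : ∀ i, a i / A i ≤ M := fun i => Finset.le_sup' (fun i => a i / A i) (Finset.mem_univ i)
  have hM2 : ∀ j, M ≤ (b j - 1) / B j := fun j =>
    Finset.sup'_le _ _ fun i _ => hmaxmin i j
  rw [hP u, sub_nonneg]
  calc ∑ j, Real.exp (-b j * u / B j) / (1 - Real.exp (-u / B j))
      ≤ ∑ j, Real.exp (-(M * u)) * B j / u :=
        Finset.sum_le_sum fun j _ => aux_neg10 (B j) (b j) u M (hB j) hu (hM2 j)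
    _ = ∑ i, Real.exp (-(M * u)) * A i / u := by
        rw [← Finset.sum_div, ← Finset.sum_div, ← Finset.mul_sum, ← Finset.mul_sum, hsum]
    _ ≤ ∑ i, Real.exp (-a i * u / A i) / (1 - Real.exp (-u / A i)) :=
        Finset.sum_le_sum fun i _ => aux_pos10 (A i) (a i) u M (hA i) hu (hM1 i)
end

section
/- Let p ≥ 1, let A_1,…,A_p, B_1,…,B_p be strictly positive and a_1,…,a_p, b_1,…,b_p be nonnegative reals, and set P(u) = Σ_{i=1}^p e^{−a_i u/A_i}/(1 − e^{−u/A_i}) − Σ_{i=1}^p e^{−b_i u/B_i}/(1 − e^{−u/B_i}) for u > 0. Suppose Σ_{i=1}^p B_i = Σ_{i=1}^p A_i, A_i ≥ B_i for i = 1,…,p−1, max_{1≤k≤p−1}(b_k/B_k) ≤ (b_p − 1)/B_p, and a_i/A_i ≤ (b_i − 1)/B_i for i = 1,…,p. Then P(u) ≥ 0 for all u > 0. -/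
private lemma aux_g (x : ℝ) (hx : 0 ≤ x) : 0 ≤ (x - 2) * Real.exp x + x + 2 := by
  have hmono : Monotone (fun x : ℝ => (x - 2) * Real.exp x + x + 2) := by
    have hd : ∀ x : ℝ, HasDerivAt (fun x : ℝ => (x - 2) * Real.exp x + x + 2)
        ((1 * Real.exp x + (x - 2) * Real.exp x + 1)) x := by
      intro x
      have h1 : HasDerivAt (fun x : ℝ => (x - 2) * Real.exp x)
          (1 * Real.exp x + (x - 2) * Real.exp x) x :=
        ((hasDerivAt_id x).sub_const 2).mul (Real.hasDerivAt_exp x)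
      exact (h1.add (hasDerivAt_id x)).add_const 2
    apply monotone_of_deriv_nonneg
    · exact fun x => (hd x).differentiableAt
    · intro x
      rw [(hd x).deriv]
      have hinv : Real.exp (-x) * Real.exp x = 1 := by
        rw [← Real.exp_add]; simp
      nlinarith [Real.add_one_le_exp (-x), Real.exp_pos x, Real.exp_pos (-x)]
  have h0 := hmono hx
  have he0 : ((0:ℝ) - 2) * Real.exp 0 + 0 + 2 = 0 := by simp
  simp only at h0
  linarith [h0, he0.ge]

private lemma aux1 (x : ℝ) (hx : 0 < x) :
    x⁻¹ + 1/2 ≤ (1 - Real.exp (-x))⁻¹ := by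
  have hv1 : Real.exp (-x) < 1 := Real.exp_lt_one_iff.mpr (by linarith)
  have hd : 0 < 1 - Real.exp (-x) := by linarith
  have hinv : Real.exp (-x) * Real.exp x = 1 := by rw [← Real.exp_add]; simp
  have key : 2 - x ≤ (2 + x) * Real.exp (-x) := by
    have hg := aux_g x hx.le
    nlinarith [Real.exp_pos (-x), Real.exp_pos x]
  rw [inv_eq_one_div, inv_eq_one_div, div_add_div _ _ hx.ne' two_ne_zero,
    div_le_div_iff₀ (by positivity) hd]
  nlinarith

private lemma aux2 (x : ℝ) (hx : 0 < x) :
    Real.exp (-x) / (1 - Real.exp (-x)) ≤ x⁻¹ := by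
  have hv1 : Real.exp (-x) < 1 := Real.exp_lt_one_iff.mpr (by linarith)
  have hd : 0 < 1 - Real.exp (-x) := by linarith
  have hinv : Real.exp (-x) * Real.exp x = 1 := by rw [← Real.exp_add]; simp
  rw [inv_eq_one_div, div_le_div_iff₀ hd hx]
  nlinarith [Real.add_one_le_exp x, Real.exp_pos (-x)]

theorem stmt11 (p : ℕ) (hp : 1 ≤ p)
    (A B a b : Fin p → ℝ)
    (hA : ∀ i, 0 < A i) (hB : ∀ i, 0 < B i)
    (ha : ∀ i, 0 ≤ a i) (hb : ∀ i, 0 ≤ b i)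
    (P : ℝ → ℝ)
    (hP : ∀ u, P u = (∑ i, Real.exp (-a i * u / A i) / (1 - Real.exp (-u / A i))) -
      ∑ i, Real.exp (-b i * u / B i) / (1 - Real.exp (-u / B i)))
    (l : Fin p) (hl : (l : ℕ) = p - 1)
    (hsum : ∑ i, B i = ∑ i, A i)
    (hAB : ∀ i : Fin p, (i : ℕ) < p - 1 → B i ≤ A i)
    (hmax : ∀ k : Fin p, (k : ℕ) < p - 1 → b k / B k ≤ (b l - 1) / B l)
    (hab : ∀ i, a i / A i ≤ (b i - 1) / B i) :
    ∀ u > (0 : ℝ), 0 ≤ P u := by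
  intro u hu
  rw [hP u, sub_nonneg]
  have key : ∀ i : Fin p,
      Real.exp (-b i * u / B i) / (1 - Real.exp (-u / B i))
        + Real.exp (-(b l - 1) * u / B l) * ((A i - B i) / u + 1/2)
      ≤ Real.exp (-a i * u / A i) / (1 - Real.exp (-u / A i)) := by
    intro i
    have hAi := hA i
    have hBi := hB i
    have hBl := hB l
    have hxA : 0 < u / A i := div_pos hu hAi
    have hxB : 0 < u / B i := div_pos hu hBi
    have hdA : 0 < 1 - Real.exp (-(u / A i)) := by
      have : Real.exp (-(u / A i)) < 1 := Real.exp_lt_one_iff.mpr (by linarith)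
      linarith
    have hdB : 0 < 1 - Real.exp (-(u / B i)) := by
      have : Real.exp (-(u / B i)) < 1 := Real.exp_lt_one_iff.mpr (by linarith)
      linarith
    set m := Real.exp (-(b i - 1) * u / B i) with hm
    set E := Real.exp (-(b l - 1) * u / B l) with hE
    -- lower bound for the A-term
    have hnum : m ≤ Real.exp (-a i * u / A i) := by
      rw [hm]
      apply Real.exp_le_exp.mpr
      rw [neg_mul, neg_mul, neg_div, neg_div, neg_le_neg_iff, div_le_div_iff₀ hAi hBi]
      have h2 := (div_le_div_iff₀ hAi hBi).mp (hab i)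
      nlinarith [hu.le]
    have hA_lb : m * (A i / u + 1/2) ≤
        Real.exp (-a i * u / A i) / (1 - Real.exp (-u / A i)) := by
      have h1 : A i / u + 1/2 ≤ (1 - Real.exp (-(u / A i)))⁻¹ := by
        have := aux1 (u / A i) hxA
        rwa [inv_div] at this
      rw [neg_div, div_eq_mul_inv]
      exact mul_le_mul hnum h1 (by positivity) (Real.exp_pos _).le
    -- upper bound for the B-term
    have hB_ub : Real.exp (-b i * u / B i) / (1 - Real.exp (-u / B i))
        ≤ m * (B i / u) := by
      have hsplit : Real.exp (-b i * u / B i) = m * Real.exp (-(u / B i)) := by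
        rw [hm, ← Real.exp_add]
        congr 1
        field_simp
        ring
      rw [neg_div, hsplit, mul_div_assoc]
      apply mul_le_mul_of_nonneg_left _ (Real.exp_pos _).le
      have := aux2 (u / B i) hxB
      rwa [inv_div] at this
    -- compare m and E
    have hEc : E * ((A i - B i) / u + 1/2) ≤ m * ((A i - B i) / u + 1/2) := by
      rcases eq_or_ne i l with rfl | hne
      · exact le_of_eq rfl
      · have hlt : (i : ℕ) < p - 1 := by
          have h1 : (i : ℕ) ≤ p - 1 := Nat.le_pred_of_lt i.isLt
          exact lt_of_le_of_ne h1 (fun h => hne (Fin.ext (h.trans hl.symm)))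
        have hABi := hAB i hlt
        have hc : 0 ≤ (A i - B i) / u + 1/2 := by
          have : 0 ≤ (A i - B i) / u := div_nonneg (by linarith) hu.le
          linarith
        apply mul_le_mul_of_nonneg_right _ hc
        rw [hm, hE]
        apply Real.exp_le_exp.mpr
        rw [neg_mul, neg_mul, neg_div, neg_div, neg_le_neg_iff, div_le_div_iff₀ hBi hBl]
        have h3 : (b i - 1) / B i ≤ (b l - 1) / B l := by
          refine le_trans ?_ (hmax i hlt)
          exact (div_le_div_iff_of_pos_right hBi).mpr (by linarith)
        have h4 := (div_le_div_iff₀ hBi hBl).mp h3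
        nlinarith [hu.le]
    calc Real.exp (-b i * u / B i) / (1 - Real.exp (-u / B i))
          + E * ((A i - B i) / u + 1/2)
        ≤ m * (B i / u) + m * ((A i - B i) / u + 1/2) := add_le_add hB_ub hEc
      _ = m * (A i / u + 1/2) := by rw [sub_div]; ring
      _ ≤ Real.exp (-a i * u / A i) / (1 - Real.exp (-u / A i)) := hA_lb
  have hsum2 : ∑ i : Fin p, ((A i - B i) / u + 1/2) = p * (1/2) := by
    rw [Finset.sum_add_distrib]
    have h1 : ∑ i : Fin p, (A i - B i) / u = 0 := by
      rw [← Finset.sum_div, Finset.sum_sub_distrib, hsum, sub_self, zero_div]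
    rw [h1, zero_add, Finset.sum_const, Finset.card_univ, Fintype.card_fin,
      nsmul_eq_mul]
  have h : ∑ i : Fin p, (Real.exp (-b i * u / B i) / (1 - Real.exp (-u / B i))
        + Real.exp (-(b l - 1) * u / B l) * ((A i - B i) / u + 1/2))
      ≤ ∑ i : Fin p, Real.exp (-a i * u / A i) / (1 - Real.exp (-u / A i)) :=
    Finset.sum_le_sum (fun i _ => key i)
  rw [Finset.sum_add_distrib, ← Finset.mul_sum, hsum2] at h
  have hEp : 0 ≤ Real.exp (-(b l - 1) * u / B l) * (p * (1/2)) := by positivity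
  linarith
end

section
/- Let p ≥ 1, let A_1,…,A_p, B_1,…,B_p be strictly positive and a_1,…,a_p, b_1,…,b_p be nonnegative reals, and set P(u) = Σ_{i=1}^p e^{−a_i u/A_i}/(1 − e^{−u/A_i}) − Σ_{i=1}^p e^{−b_i u/B_i}/(1 − e^{−u/B_i}) for u > 0. Suppose that 0 ≤ a_1/A_1 ≤ a_2/A_2 ≤ … ≤ a_p/A_p, 0 ≤ b_1/B_1 ≤ b_2/B_2 ≤ … ≤ b_p/B_p, 0 < 1/A_1 ≤ 1/A_2 ≤ … ≤ 1/A_p, 0 < 1/B_1 ≤ 1/B_2 ≤ … ≤ 1/B_p, and that for every k = 1,…,p one has Σ_{i=1}^k a_i/A_i ≤ Σ_{i=1}^k b_i/B_i and Σ_{i=1}^k 1/A_i ≤ Σ_{i=1}^k 1/B_i. Then P(u) ≥ 0 for all u > 0. -/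
/-!
Expanding each fraction as a geometric series gives
`P u = ∑ₙ (∑ᵢ exp (-u xᵢ⁽ⁿ⁾) - ∑ᵢ exp (-u yᵢ⁽ⁿ⁾))` with `xᵢ⁽ⁿ⁾ = (aᵢ + n) / Aᵢ` and
`yᵢ⁽ⁿ⁾ = (bᵢ + n) / Bᵢ`. For each `n` the sequence `y⁽ⁿ⁾` is increasing and its partial sums
dominate those of `x⁽ⁿ⁾`, so each summand is nonnegative by the Tomić–Weyl inequality for the
convex decreasing function `t ↦ exp (-u t)`: compare with the tangent lines at the `yᵢ` and sum
by parts, the slopes `-f' (yᵢ)` being nonnegative and decreasing.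
-/

open Finset Real

theorem Fin.mul_sum_le_sum_mul_of_antitone {R : Type*} [CommRing R] [LinearOrder R]
    [IsStrictOrderedRing R] {n : ℕ} {g e : Fin (n + 1) → R} (hg : Antitone g)
    (he : ∀ k, 0 ≤ ∑ i ∈ Iic k, e i) :
    g (Fin.last n) * ∑ i, e i ≤ ∑ i, g i * e i := by
  induction n with
  | zero => simp
  | succ n ih =>
    have hrestrict : ∀ k : Fin (n + 1), 0 ≤ ∑ i ∈ Iic k, e (Fin.castSucc i) := by
      intro k
      simpa [← Fin.map_castSuccEmb_Iic, sum_map] using he k.castSucc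
    have hprefix : 0 ≤ ∑ i : Fin (n + 1), e (Fin.castSucc i) := by
      simpa [← Fin.top_eq_last, Iic_top] using hrestrict (Fin.last n)
    have hlast : g (Fin.last (n + 1)) ≤ g (Fin.last n).castSucc :=
      hg (Fin.castSucc_lt_last _).le
    calc g (Fin.last (n + 1)) * ∑ i, e i
        = g (Fin.last (n + 1)) * ∑ i : Fin (n + 1), e i.castSucc
          + g (Fin.last (n + 1)) * e (Fin.last (n + 1)) := by
          rw [Fin.sum_univ_castSucc, mul_add]
      _ ≤ g (Fin.last n).castSucc * ∑ i : Fin (n + 1), e i.castSucc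
          + g (Fin.last (n + 1)) * e (Fin.last (n + 1)) := by
          gcongr
      _ ≤ ∑ i : Fin (n + 1), g i.castSucc * e i.castSucc
          + g (Fin.last (n + 1)) * e (Fin.last (n + 1)) := by
          gcongr
          exact ih (hg.comp_monotone Fin.strictMono_castSucc.monotone) hrestrict
      _ = ∑ i, g i * e i := (Fin.sum_univ_castSucc fun i ↦ g i * e i).symm

theorem Fin.sum_mul_nonneg_of_antitone {R : Type*} [CommRing R] [LinearOrder R]
    [IsStrictOrderedRing R] {n : ℕ} {g e : Fin n → R} (hg0 : ∀ i, 0 ≤ g i) (hg : Antitone g)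
    (he : ∀ k, 0 ≤ ∑ i ∈ Iic k, e i) :
    0 ≤ ∑ i, g i * e i := by
  cases n with
  | zero => simp
  | succ n =>
    have htotal : 0 ≤ ∑ i, e i := by simpa [← Fin.top_eq_last, Iic_top] using he (Fin.last n)
    exact (mul_nonneg (hg0 _) htotal).trans (Fin.mul_sum_le_sum_mul_of_antitone hg he)

theorem ConvexOn.add_deriv_mul_sub_le {f : ℝ → ℝ} (hf : ConvexOn ℝ Set.univ f)
    (hfd : Differentiable ℝ f) (x y : ℝ) :
    f y + deriv f y * (x - y) ≤ f x := by
  rcases lt_trichotomy x y with hxy | rfl | hxy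
  · have h := hf.slope_le_deriv (Set.mem_univ x) (Set.mem_univ y) hxy (hfd y)
    rw [slope_def_field, div_le_iff₀ (sub_pos.2 hxy)] at h
    nlinarith
  · simp
  · have h := hf.deriv_le_slope (Set.mem_univ y) (Set.mem_univ x) hxy (hfd y)
    rw [slope_def_field, le_div_iff₀ (sub_pos.2 hxy)] at h
    linarith

theorem ConvexOn.sum_le_sum_of_sum_Iic_le {n : ℕ} {f : ℝ → ℝ} (hf : ConvexOn ℝ Set.univ f)
    (hfd : Differentiable ℝ f) (hfa : Antitone f) {x y : Fin n → ℝ} (hy : Monotone y)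
    (hxy : ∀ k, ∑ i ∈ Iic k, x i ≤ ∑ i ∈ Iic k, y i) :
    ∑ i, f (y i) ≤ ∑ i, f (x i) := by
  have htangent : ∀ i, f (y i) + -deriv f (y i) * (y i - x i) ≤ f (x i) := fun i ↦ by
    linarith [hf.add_deriv_mul_sub_le hfd (x i) (y i)]
  have habel : 0 ≤ ∑ i, -deriv f (y i) * (y i - x i) := by
    refine Fin.sum_mul_nonneg_of_antitone (fun i ↦ neg_nonneg.2 hfa.deriv_nonpos)
      (fun i j hij ↦ neg_le_neg (hf.monotoneOn_deriv (fun z _ ↦ hfd z)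
        (Set.mem_univ _) (Set.mem_univ _) (hy hij))) (fun k ↦ ?_)
    rw [sum_sub_distrib, sub_nonneg]
    exact hxy k
  calc ∑ i, f (y i) ≤ ∑ i, (f (y i) + -deriv f (y i) * (y i - x i)) := by
        rw [sum_add_distrib]; linarith
    _ ≤ ∑ i, f (x i) := sum_le_sum fun i _ ↦ htangent i

theorem Real.convexOn_exp_neg_mul {u : ℝ} : ConvexOn ℝ Set.univ fun t ↦ exp (-u * t) :=
  convexOn_exp.comp_linearMap (LinearMap.mulLeft ℝ (-u))

theorem Real.antitone_exp_neg_mul {u : ℝ} (hu : 0 ≤ u) : Antitone fun t ↦ exp (-u * t) :=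
  fun s t hst ↦ exp_le_exp.2 (by nlinarith)

theorem Real.hasSum_exp_neg_add_nat_mul (c : ℝ) {d : ℝ} (hd : 0 < d) :
    HasSum (fun n : ℕ ↦ exp (-(c + n * d))) (exp (-c) / (1 - exp (-d))) := by
  have hr : exp (-d) < 1 := exp_lt_one_iff.2 (neg_lt_zero.2 hd)
  have hterm : (fun n : ℕ ↦ exp (-(c + n * d))) = fun n ↦ exp (-c) * exp (-d) ^ n := by
    funext n
    rw [← exp_nat_mul, ← exp_add]
    ring_nf
  rw [hterm, div_eq_mul_inv]
  exact (hasSum_geometric_of_lt_one (exp_pos _).le hr).mul_left _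

theorem Real.hasSum_sum_exp_div_one_sub_exp {ι : Type*} [Fintype ι] {A : ι → ℝ} (a : ι → ℝ)
    (hA : ∀ i, 0 < A i) {u : ℝ} (hu : 0 < u) :
    HasSum (fun n : ℕ ↦ ∑ i, exp (-u * (a i / A i + n * (1 / A i))))
      (∑ i, exp (-a i * u / A i) / (1 - exp (-u / A i))) := by
  refine hasSum_sum fun i _ ↦ ?_
  convert hasSum_exp_neg_add_nat_mul (a i * u / A i) (div_pos hu (hA i)) using 1
  · funext n
    ring_nf
  · ring_nf

theorem stmt12_general (p : ℕ)
    (A B a b : Fin p → ℝ)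
    (hA : ∀ i, 0 < A i) (hB : ∀ i, 0 < B i)
    (P : ℝ → ℝ)
    (hP : ∀ u, P u = (∑ i, Real.exp (-a i * u / A i) / (1 - Real.exp (-u / A i))) -
      ∑ i, Real.exp (-b i * u / B i) / (1 - Real.exp (-u / B i)))
    (hbB : ∀ i j : Fin p, i ≤ j → b i / B i ≤ b j / B j)
    (hiB : ∀ i j : Fin p, i ≤ j → 1 / B i ≤ 1 / B j)
    (hmaj1 : ∀ k : Fin p, ∑ i ∈ Finset.Iic k, a i / A i ≤ ∑ i ∈ Finset.Iic k, b i / B i)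
    (hmaj2 : ∀ k : Fin p, ∑ i ∈ Finset.Iic k, 1 / A i ≤ ∑ i ∈ Finset.Iic k, 1 / B i) :
    ∀ u > (0 : ℝ), 0 ≤ P u := by
  intro u hu
  have hlevel : ∀ n : ℕ, ∑ i, exp (-u * (b i / B i + n * (1 / B i)))
      ≤ ∑ i, exp (-u * (a i / A i + n * (1 / A i))) := fun n ↦ by
    refine convexOn_exp_neg_mul.sum_le_sum_of_sum_Iic_le (by fun_prop)
      (antitone_exp_neg_mul hu.le)
      (fun i j hij ↦ add_le_add (hbB i j hij)
        (mul_le_mul_of_nonneg_left (hiB i j hij) n.cast_nonneg)) fun k ↦ ?_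
    simp only [sum_add_distrib, ← mul_sum]
    exact add_le_add (hmaj1 k) (mul_le_mul_of_nonneg_left (hmaj2 k) n.cast_nonneg)
  rw [hP u]
  exact ((hasSum_sum_exp_div_one_sub_exp a hA hu).sub
    (hasSum_sum_exp_div_one_sub_exp b hB hu)).nonneg fun n ↦ sub_nonneg.2 (hlevel n)

theorem stmt12 (p : ℕ) (hp : 1 ≤ p)
    (A B a b : Fin p → ℝ)
    (hA : ∀ i, 0 < A i) (hB : ∀ i, 0 < B i)
    (ha : ∀ i, 0 ≤ a i) (hb : ∀ i, 0 ≤ b i)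
    (P : ℝ → ℝ)
    (hP : ∀ u, P u = (∑ i, Real.exp (-a i * u / A i) / (1 - Real.exp (-u / A i))) -
      ∑ i, Real.exp (-b i * u / B i) / (1 - Real.exp (-u / B i)))
    (haA : ∀ i j : Fin p, i ≤ j → a i / A i ≤ a j / A j)
    (hbB : ∀ i j : Fin p, i ≤ j → b i / B i ≤ b j / B j)
    (hiA : ∀ i j : Fin p, i ≤ j → 1 / A i ≤ 1 / A j)
    (hiB : ∀ i j : Fin p, i ≤ j → 1 / B i ≤ 1 / B j)
    (hmaj1 : ∀ k : Fin p, ∑ i ∈ Finset.Iic k, a i / A i ≤ ∑ i ∈ Finset.Iic k, b i / B i)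
    (hmaj2 : ∀ k : Fin p, ∑ i ∈ Finset.Iic k, 1 / A i ≤ ∑ i ∈ Finset.Iic k, 1 / B i) :
    ∀ u > (0 : ℝ), 0 ≤ P u :=
  stmt12_general p A B a b hA hB P hP hbB hiB hmaj1 hmaj2
end

section
/- Let p ≥ 1 and let A_1,…,A_p, B_1,…,B_p be strictly positive reals with 1/A_1 ≤ 1/A_2 ≤ … ≤ 1/A_p, 1/B_1 ≤ 1/B_2 ≤ … ≤ 1/B_p, and Σ_{i=1}^k 1/A_i ≤ Σ_{i=1}^k 1/B_i for every k = 1,…,p. Then Σ_{j=1}^p B_j ≤ Σ_{j=1}^p A_j, and equality Σ_{j=1}^p B_j = Σ_{j=1}^p A_j holds if and only if (B_1,…,B_p) is a permutation of (A_1,…,A_p). -/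
open Finset

/-!
Write `aᵢ = 1/Aᵢ` and `bᵢ = 1/Bᵢ`. Convexity of `x ↦ 1/x`, in the exact form
`A - B = B² (1/B - 1/A) + (A - B)²/A`, bounds `∑ (A - B)` below by `∑ Bᵢ² (bᵢ - aᵢ)`.
The weights `Bᵢ²` decrease and the partial sums of `bᵢ - aᵢ` are nonnegative, so summation
by parts makes this lower bound nonnegative. Equality forces every `(Aᵢ - Bᵢ)²/Aᵢ` to vanish,
so `A = B`.
-/

theorem Fin.sum_mul_nonneg_of_antitone_of_sum_Iic_nonneg {R : Type*} [CommRing R] [LinearOrder R]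
    [IsStrictOrderedRing R] {n : ℕ} {w d : Fin n → R} (hw : Antitone w) (hw0 : ∀ i, 0 ≤ w i)
    (hd : ∀ k, 0 ≤ ∑ i ∈ Iic k, d i) :
    0 ≤ ∑ i, w i * d i := by
  induction n with
  | zero => simp
  | succ n ih =>
    set c := w (Fin.last n)
    have hsplit : ∑ i, w i * d i
        = ∑ i : Fin n, (w i.castSucc - c) * d i.castSucc + c * ∑ i, d i := by
      simp only [Fin.sum_univ_castSucc, sub_mul, sum_sub_distrib, ← mul_sum]
      ring
    have hinit : 0 ≤ ∑ i : Fin n, (w i.castSucc - c) * d i.castSucc :=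
      ih (fun i j hij => sub_le_sub_right (hw (Fin.castSucc_le_castSucc_iff.2 hij)) c)
        (fun i => sub_nonneg.2 (hw (Fin.le_last _)))
        (fun k => by simpa [← Fin.map_castSuccEmb_Iic] using hd k.castSucc)
    have htotal : 0 ≤ ∑ i, d i := by simpa [← Fin.top_eq_last] using hd (Fin.last n)
    rw [hsplit]
    exact add_nonneg hinit (mul_nonneg (hw0 _) htotal)

theorem sub_eq_sq_mul_one_div_sub_add_sq_div {K : Type*} [Field K] {a b : K} (ha : a ≠ 0)
    (hb : b ≠ 0) : a - b = b ^ 2 * (1 / b - 1 / a) + (a - b) ^ 2 / a := by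
  field_simp
  ring

theorem stmt13_general (p : ℕ)
    (A B : Fin p → ℝ)
    (hA : ∀ i, 0 < A i) (hB : ∀ i, 0 < B i)
    (hiB : ∀ i j : Fin p, i ≤ j → 1 / B i ≤ 1 / B j)
    (hmaj : ∀ k : Fin p, ∑ i ∈ Finset.Iic k, 1 / A i ≤ ∑ i ∈ Finset.Iic k, 1 / B i) :
    (∑ j, B j ≤ ∑ j, A j) ∧
      ((∑ j, B j = ∑ j, A j) ↔ ∃ σ : Equiv.Perm (Fin p), ∀ i, B i = A (σ i)) := by
  have hdecomp : ∑ j, A j - ∑ j, B j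
      = ∑ i, B i ^ 2 * (1 / B i - 1 / A i) + ∑ i, (A i - B i) ^ 2 / A i := by
    rw [← sum_sub_distrib, ← sum_add_distrib]
    exact sum_congr rfl fun i _ =>
      sub_eq_sq_mul_one_div_sub_add_sq_div (hA i).ne' (hB i).ne'
  have hparts : 0 ≤ ∑ i, B i ^ 2 * (1 / B i - 1 / A i) := by
    refine Fin.sum_mul_nonneg_of_antitone_of_sum_Iic_nonneg (fun i j hij => ?_)
      (fun i => sq_nonneg _) (fun k => by simpa [sum_sub_distrib] using hmaj k)
    have hBji : B j ≤ B i := (one_div_le_one_div (hB i) (hB j)).1 (hiB i j hij)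
    exact pow_le_pow_left₀ (hB j).le hBji 2
  have hterm : ∀ i ∈ univ, 0 ≤ (A i - B i) ^ 2 / A i :=
    fun i _ => div_nonneg (sq_nonneg _) (hA i).le
  have hsq := sum_nonneg hterm
  refine ⟨by linarith, fun heq => ⟨Equiv.refl _, fun i => ?_⟩, ?_⟩
  · have hzero : ∑ i, (A i - B i) ^ 2 / A i = 0 := by linarith
    have hi := (sum_eq_zero_iff_of_nonneg hterm).1 hzero i (mem_univ i)
    rw [div_eq_zero_iff, sq_eq_zero_iff, sub_eq_zero] at hi
    exact (hi.resolve_right (hA i).ne').symm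
  · rintro ⟨σ, hσ⟩
    simp only [hσ, Equiv.sum_comp σ A]

theorem stmt13 (p : ℕ) (hp : 1 ≤ p)
    (A B : Fin p → ℝ)
    (hA : ∀ i, 0 < A i) (hB : ∀ i, 0 < B i)
    (hiA : ∀ i j : Fin p, i ≤ j → 1 / A i ≤ 1 / A j)
    (hiB : ∀ i j : Fin p, i ≤ j → 1 / B i ≤ 1 / B j)
    (hmaj : ∀ k : Fin p, ∑ i ∈ Finset.Iic k, 1 / A i ≤ ∑ i ∈ Finset.Iic k, 1 / B i) :
    (∑ j, B j ≤ ∑ j, A j) ∧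
      ((∑ j, B j = ∑ j, A j) ↔ ∃ σ : Equiv.Perm (Fin p), ∀ i, B i = A (σ i)) :=
  stmt13_general p A B hA hB hiB hmaj
end

section
/- Let p ≥ 1 and let a_1,…,a_p, b_1,…,b_p be nonnegative reals satisfying 0 ≤ a_1 ≤ a_2 ≤ … ≤ a_p, 0 ≤ b_1 ≤ b_2 ≤ … ≤ b_p, and Σ_{i=1}^k a_i ≤ Σ_{i=1}^k b_i for every k = 1,…,p. Then the function U(x) = ∏_{i=1}^p Γ(x + a_i)/Γ(x + b_i) is logarithmically completely monotonic on (0,∞). -/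
open MeasureTheory

open Filter Topology Finset

section Aux

private lemma key_ineq (M : ℕ) (A B : ℝ) (hA : 0 < A) (hB : 0 ≤ B) :
    A ^ (M + 1) + ((M : ℝ) + 1) * A ^ M * (B - A) ≤ B ^ (M + 1) := by
  have ha : (-2 : ℝ) ≤ (B - A) / A := by
    rw [le_div_iff₀ hA]; linarith
  have h := one_add_mul_le_pow ha (M + 1)
  have h1 : (1 + (B - A) / A) = B / A := by field_simp; ring
  rw [h1, div_pow] at h
  have h2 := mul_le_mul_of_nonneg_right h (pow_pos hA (M + 1)).le
  rw [div_mul_cancel₀ _ (by positivity : A ^ (M+1) ≠ 0)] at h2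
  have e : (1 + ((M : ℝ) + 1) * ((B - A) / A)) * A ^ (M + 1)
      = A ^ (M + 1) + ((M : ℝ) + 1) * A ^ M * (B - A) := by
    field_simp; ring
  push_cast at h2
  rw [e] at h2
  exact h2

private lemma grad_ineq (m : ℕ) (A B : ℝ) (hA : 0 < A) (hB : 0 < B) :
    ((m : ℝ) + 1) * ((B ^ (m + 2))⁻¹) * (B - A) ≤ (A ^ (m + 1))⁻¹ - (B ^ (m + 1))⁻¹ := by
  have hk := key_ineq (m + 1) A B hA hB.le
  have h0 : 0 ≤ B ^ (m+1+1) - (A ^ (m+1+1) + ((m:ℝ)+1+1) * A ^ (m+1) * (B - A)) := by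
    push_cast at hk; linarith
  have hnum : 0 ≤ B ^ (m + 2) - A ^ (m + 1) * B - ((m : ℝ) + 1) * A ^ (m + 1) * (B - A) := by
    have e : B ^ (m + 2) - A ^ (m + 1) * B - ((m : ℝ) + 1) * A ^ (m + 1) * (B - A)
        = B ^ (m+1+1) - (A ^ (m+1+1) + ((m:ℝ)+1+1) * A ^ (m + 1) * (B - A)) := by ring
    rw [e]; exact h0
  have hd : (A ^ (m + 1))⁻¹ - (B ^ (m + 1))⁻¹ - ((m : ℝ) + 1) * ((B ^ (m + 2))⁻¹) * (B - A)
      = (B ^ (m + 2) - A ^ (m + 1) * B - ((m : ℝ) + 1) * A ^ (m + 1) * (B - A))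
        / (A ^ (m + 1) * B ^ (m + 2)) := by
    field_simp
    ring
  have h3 : 0 ≤ (A ^ (m + 1))⁻¹ - (B ^ (m + 1))⁻¹
      - ((m : ℝ) + 1) * ((B ^ (m + 2))⁻¹) * (B - A) := by
    rw [hd]; positivity
  linarith

private lemma abel_nonneg (p : ℕ) (hp : 1 ≤ p) (g d : ℕ → ℝ) (hg0 : ∀ i < p, g i ≤ 0)
    (hgm : ∀ i, i + 1 < p → g i ≤ g (i + 1))
    (hS : ∀ k < p, ∑ j ∈ range (k + 1), d j ≤ 0) :
    0 ≤ ∑ i ∈ range p, g i * d i := by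
  have h := Finset.sum_range_by_parts g d p
  simp only [smul_eq_mul] at h
  rw [h]
  have h1 : 0 ≤ g (p - 1) * ∑ i ∈ range p, d i := by
    have hp1 : p - 1 < p := Nat.sub_lt hp one_pos
    have hh := hS (p - 1) hp1
    rw [Nat.sub_add_cancel hp] at hh
    have := mul_nonneg (neg_nonneg.mpr (hg0 _ hp1)) (neg_nonneg.mpr hh)
    rw [neg_mul_neg] at this
    exact this
  have h2 : ∑ i ∈ range (p - 1), (g (i + 1) - g i) * ∑ j ∈ range (i + 1), d j ≤ 0 := by
    apply Finset.sum_nonpos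
    intro i hi
    rw [Finset.mem_range] at hi
    have hip : i + 1 < p := by omega
    exact mul_nonpos_of_nonneg_of_nonpos (by linarith [hgm i hip]) (hS i (by omega))
  linarith

private lemma maj_ineq (p : ℕ) (hp : 1 ≤ p) (m : ℕ) (t : ℝ) (ht : 0 < t) (A B : ℕ → ℝ)
    (hA0 : ∀ i < p, 0 ≤ A i) (hB0 : ∀ i < p, 0 ≤ B i)
    (hBm : ∀ i, i + 1 < p → B i ≤ B (i + 1))
    (hS : ∀ k < p, ∑ j ∈ range (k + 1), A j ≤ ∑ j ∈ range (k + 1), B j) :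
    ∑ i ∈ range p, ((t + B i) ^ (m + 1))⁻¹ ≤ ∑ i ∈ range p, ((t + A i) ^ (m + 1))⁻¹ := by
  set g : ℕ → ℝ := fun i => -(((m : ℝ) + 1) * ((t + B i) ^ (m + 2))⁻¹) with hg
  set d : ℕ → ℝ := fun i => A i - B i with hd
  have habel : 0 ≤ ∑ i ∈ range p, g i * d i := by
    apply abel_nonneg p hp g d
    · intro i hi
      have hb : 0 < t + B i := by have := hB0 i hi; linarith
      simp only [hg]
      rw [neg_nonpos]
      positivity
    · intro i hip
      have hb1 : 0 < t + B i := by have := hB0 i (by omega); linarith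
      have hb2 : 0 < t + B (i + 1) := by have := hB0 (i + 1) hip; linarith
      simp only [hg, neg_le_neg_iff]
      have hle : (t + B i) ^ (m + 2) ≤ (t + B (i + 1)) ^ (m + 2) :=
        pow_le_pow_left₀ hb1.le (by linarith [hBm i hip]) _
      have hinv : ((t + B (i+1)) ^ (m + 2))⁻¹ ≤ ((t + B i) ^ (m + 2))⁻¹ :=
        inv_anti₀ (by positivity) hle
      exact mul_le_mul_of_nonneg_left hinv (by positivity)
    · intro k hk
      have := hS k hk
      simp only [hd, Finset.sum_sub_distrib]
      linarith
  have hsum : ∑ i ∈ range p, g i * d i ≤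
      ∑ i ∈ range p, (((t + A i) ^ (m + 1))⁻¹ - ((t + B i) ^ (m + 1))⁻¹) := by
    apply Finset.sum_le_sum
    intro i hi
    rw [Finset.mem_range] at hi
    have hAi : 0 < t + A i := by have := hA0 i hi; linarith
    have hBi : 0 < t + B i := by have := hB0 i hi; linarith
    have hgr := grad_ineq m (t + A i) (t + B i) hAi hBi
    calc g i * d i
        = ((m : ℝ) + 1) * (((t + B i) ^ (m + 2))⁻¹) * ((t + B i) - (t + A i)) := by
          simp only [hg, hd]; ring
      _ ≤ ((t + A i) ^ (m + 1))⁻¹ - ((t + B i) ^ (m + 1))⁻¹ := hgr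
  rw [Finset.sum_sub_distrib] at hsum
  linarith

/-- term of the polygamma-type series -/
private noncomputable def Tm (n : ℕ) (c : ℝ) (k : ℕ) (x : ℝ) : ℝ :=
  (-1) ^ n * n.factorial * ((x + c + k) ^ (n + 1))⁻¹

/-- the polygamma-type difference series -/
private noncomputable def Pm (n : ℕ) (a b : ℝ) (x : ℝ) : ℝ :=
  ∑' k : ℕ, (Tm n a k x - Tm n b k x)

private lemma Tm_zero (c : ℝ) (k : ℕ) (x : ℝ) : Tm 0 c k x = (x + c + k)⁻¹ := by
  simp [Tm]

private lemma base_summable : Summable (fun k : ℕ => (((k : ℝ) + 1) ^ 2)⁻¹) := by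
  have h : Summable (fun k : ℕ => ((k : ℝ) ^ 2)⁻¹) := by
    simpa using Real.summable_one_div_nat_pow.mpr (le_refl 2)
  have := (summable_nat_add_iff 1).mpr h
  simpa [add_comm] using this

private lemma ck_bound {c : ℝ} (c' : ℝ) (hc' : 0 ≤ c') {x : ℝ} (hx : c ≤ x) (k : ℕ) :
    min c 1 * ((k : ℝ) + 1) ≤ x + c' + k := by
  have h1 : min c 1 ≤ c := min_le_left _ _
  have h2 : min c 1 ≤ 1 := min_le_right _ _
  have hk : (0:ℝ) ≤ k := Nat.cast_nonneg k
  nlinarith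

private lemma Tm_bound {c : ℝ} (hc : 0 < c) {n : ℕ} (hn : 1 ≤ n) (c' : ℝ) (hc' : 0 ≤ c')
    {x : ℝ} (hx : c ≤ x) (k : ℕ) :
    |Tm n c' k x| ≤ (n.factorial / (min c 1) ^ (n + 1)) * (((k : ℝ) + 1) ^ 2)⁻¹ := by
  have hm : 0 < min c 1 := lt_min hc one_pos
  have hk1 : (1:ℝ) ≤ (k : ℝ) + 1 := le_add_of_nonneg_left (Nat.cast_nonneg k)
  have hb := ck_bound c' hc' hx k
  have hpos : 0 < x + c' + k := lt_of_lt_of_le (by positivity) hb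
  have h1 : (min c 1 * ((k : ℝ) + 1)) ^ (n + 1) ≤ (x + c' + k) ^ (n + 1) :=
    pow_le_pow_left₀ (mul_nonneg hm.le (by positivity)) hb _
  have h2 : min c 1 ^ (n + 1) * ((k : ℝ) + 1) ^ 2 ≤ (min c 1 * ((k : ℝ) + 1)) ^ (n + 1) := by
    rw [mul_pow]
    have h2a : ((k : ℝ) + 1) ^ 2 ≤ ((k : ℝ) + 1) ^ (n + 1) :=
      pow_le_pow_right₀ hk1 (by omega)
    exact mul_le_mul_of_nonneg_left h2a (by positivity)
  have h3 : ((x + c' + k) ^ (n + 1))⁻¹ ≤ (min c 1 ^ (n + 1) * ((k : ℝ) + 1) ^ 2)⁻¹ :=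
    inv_anti₀ (by positivity) (le_trans h2 h1)
  rw [Tm, abs_mul, abs_mul]
  rw [abs_inv, abs_of_pos (by positivity : (0:ℝ) < (x + c' + k) ^ (n + 1))]
  have habs1 : |(-1 : ℝ) ^ n| = 1 := by
    rw [abs_pow, abs_neg, abs_one, one_pow]
  rw [habs1, one_mul, abs_of_nonneg (by positivity : (0:ℝ) ≤ (n.factorial : ℝ))]
  calc (n.factorial : ℝ) * ((x + c' + k) ^ (n + 1))⁻¹
      ≤ (n.factorial : ℝ) * (min c 1 ^ (n + 1) * ((k : ℝ) + 1) ^ 2)⁻¹ :=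
        mul_le_mul_of_nonneg_left h3 (by positivity)
    _ = (n.factorial / (min c 1) ^ (n + 1)) * (((k : ℝ) + 1) ^ 2)⁻¹ := by
        rw [mul_inv, div_eq_mul_inv, mul_assoc]

private lemma Tm_zero_bound {c : ℝ} (hc : 0 < c) (a b : ℝ) (ha : 0 ≤ a) (hb : 0 ≤ b)
    {x : ℝ} (hx : c ≤ x) (k : ℕ) :
    |Tm 0 a k x - Tm 0 b k x| ≤ (|a - b| / (min c 1) ^ 2) * (((k : ℝ) + 1) ^ 2)⁻¹ := by
  have hm : 0 < min c 1 := lt_min hc one_pos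
  have hba := ck_bound a ha hx k
  have hbb := ck_bound b hb hx k
  have hpa : 0 < x + a + k := lt_of_lt_of_le (by positivity) hba
  have hpb : 0 < x + b + k := lt_of_lt_of_le (by positivity) hbb
  rw [Tm_zero, Tm_zero]
  have he : (x + a + k)⁻¹ - (x + b + k)⁻¹ = (b - a) / ((x + a + k) * (x + b + k)) := by
    field_simp
    ring
  rw [he, abs_div, abs_of_pos (by positivity : (0:ℝ) < (x + a + k) * (x + b + k)),
    abs_sub_comm b a]
  have hprod : min c 1 ^ 2 * ((k:ℝ)+1)^2 ≤ (x + a + k) * (x + b + k) := by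
    calc min c 1 ^ 2 * ((k:ℝ)+1)^2
        = (min c 1 * ((k : ℝ) + 1)) * (min c 1 * ((k : ℝ) + 1)) := by ring
      _ ≤ (x + a + k) * (x + b + k) := mul_le_mul hba hbb (by positivity) hpa.le
  have hrhs : (|a - b| / (min c 1) ^ 2) * (((k : ℝ) + 1) ^ 2)⁻¹
      = |a - b| / (min c 1 ^ 2 * ((k:ℝ)+1)^2) := by
    rw [div_mul_eq_mul_div, div_eq_div_iff (by positivity) (by positivity)]
    field_simp
  rw [hrhs]
  exact div_le_div_of_nonneg_left (abs_nonneg _) (by positivity) hprod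

private noncomputable def Cm (n : ℕ) (a b c : ℝ) : ℝ :=
  |a - b| / (min c 1) ^ 2 + 2 * n.factorial / (min c 1) ^ (n + 1)

private lemma Tm_diff_bound {c : ℝ} (hc : 0 < c) (n : ℕ) (a b : ℝ) (ha : 0 ≤ a) (hb : 0 ≤ b)
    {x : ℝ} (hx : c ≤ x) (k : ℕ) :
    ‖Tm n a k x - Tm n b k x‖ ≤ Cm n a b c * (((k : ℝ) + 1) ^ 2)⁻¹ := by
  have hm : 0 < min c 1 := lt_min hc one_pos
  rw [Real.norm_eq_abs, Cm, add_mul]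
  cases n with
  | zero =>
    have h1 := Tm_zero_bound hc a b ha hb hx k
    have h2 : 0 ≤ 2 * (Nat.factorial 0 : ℝ) / (min c 1) ^ (0 + 1) * (((k : ℝ) + 1) ^ 2)⁻¹ := by
      positivity
    linarith
  | succ m =>
    have h1 := Tm_bound hc (Nat.succ_le_succ (Nat.zero_le m)) a ha hx k
    have h2 := Tm_bound hc (Nat.succ_le_succ (Nat.zero_le m)) b hb hx k
    have h3 : |Tm (m+1) a k x - Tm (m+1) b k x| ≤ |Tm (m+1) a k x| + |Tm (m+1) b k x| := by
      rw [sub_eq_add_neg]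
      exact (abs_add_le _ _).trans (by rw [abs_neg])
    have h4 : 0 ≤ |a - b| / (min c 1) ^ 2 * (((k : ℝ) + 1) ^ 2)⁻¹ := by positivity
    have he : 2 * ((m+1).factorial : ℝ) / (min c 1) ^ (m + 1 + 1) * (((k : ℝ) + 1) ^ 2)⁻¹
        = ((m+1).factorial / (min c 1) ^ (m + 1 + 1)) * (((k : ℝ) + 1) ^ 2)⁻¹
          + ((m+1).factorial / (min c 1) ^ (m + 1 + 1)) * (((k : ℝ) + 1) ^ 2)⁻¹ := by ring
    rw [he]
    simp only [Nat.succ_eq_add_one] at h1 h2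
    linarith

private lemma Pm_summable (n : ℕ) (a b : ℝ) (ha : 0 ≤ a) (hb : 0 ≤ b) {x : ℝ} (hx : 0 < x) :
    Summable (fun k : ℕ => Tm n a k x - Tm n b k x) := by
  apply Summable.of_norm_bounded (base_summable.mul_left (Cm n a b x))
  exact fun k => Tm_diff_bound hx n a b ha hb le_rfl k

private lemma Pm_tendstoUniformlyOn (n : ℕ) (a b : ℝ) (ha : 0 ≤ a) (hb : 0 ≤ b)
    {c : ℝ} (hc : 0 < c) :
    TendstoUniformlyOn (fun N x => ∑ k ∈ range N, (Tm n a k x - Tm n b k x))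
      (Pm n a b) atTop (Set.Ici c) :=
  tendstoUniformlyOn_tsum_nat (base_summable.mul_left (Cm n a b c))
    (fun k x hx => Tm_diff_bound hc n a b ha hb hx k)

private lemma Tm_hasDerivAt (n : ℕ) (c' : ℝ) (k : ℕ) {x : ℝ} (hx : 0 < x + c' + k) :
    HasDerivAt (fun y => Tm n c' k y) (Tm (n + 1) c' k x) x := by
  have h1 : HasDerivAt (fun y : ℝ => y + c' + k) 1 x :=
    ((hasDerivAt_id x).add_const c').add_const _
  have h2 := ((h1.fun_pow (n + 1)).inv (pow_ne_zero _ hx.ne')).const_mul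
    ((-1 : ℝ) ^ n * n.factorial)
  have he : (-1 : ℝ) ^ n * n.factorial *
        (-(↑(n + 1) * (x + c' + k) ^ (n + 1 - 1) * 1) / ((x + c' + k) ^ (n + 1)) ^ 2)
      = Tm (n + 1) c' k x := by
    rw [Tm]
    push_cast [Nat.factorial_succ]
    field_simp
    ring
  simpa only [Tm, he, Pi.inv_apply] using h2

private lemma Pm_hasDerivAt (n : ℕ) (a b : ℝ) (ha : 0 ≤ a) (hb : 0 ≤ b) {x : ℝ} (hx : 0 < x) :
    HasDerivAt (Pm n a b) (Pm (n + 1) a b x) x := by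
  have hc : 0 < x / 2 := half_pos hx
  apply hasDerivAt_of_tendstoLocallyUniformlyOn (l := atTop) (isOpen_Ioi (a := x / 2))
    (f := fun N y => ∑ k ∈ range N, (Tm n a k y - Tm n b k y))
    (f' := fun N y => ∑ k ∈ range N, (Tm (n + 1) a k y - Tm (n + 1) b k y))
  · exact ((Pm_tendstoUniformlyOn (n + 1) a b ha hb hc).mono
      Set.Ioi_subset_Ici_self).tendstoLocallyUniformlyOn
  · filter_upwards with N y hy
    apply HasDerivAt.fun_sum
    intro k _
    have hya : 0 < y + a + k := by
      have h1 : x / 2 < y := hy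
      have h2 : (0:ℝ) ≤ k := Nat.cast_nonneg k
      linarith
    have hyb : 0 < y + b + k := by
      have h1 : x / 2 < y := hy
      have h2 : (0:ℝ) ≤ k := Nat.cast_nonneg k
      linarith
    exact (Tm_hasDerivAt n a k hya).sub (Tm_hasDerivAt n b k hyb)
  · intro y hy
    have hy0 : 0 < y := lt_trans hc hy
    exact (Pm_summable n a b ha hb hy0).hasSum.tendsto_sum_nat
  · exact Set.mem_Ioi.mpr (half_lt_self hx)

private lemma Pm_neg (n : ℕ) (a b x : ℝ) : Pm n a b x = -(Pm n b a x) := by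
  calc Pm n a b x = ∑' k : ℕ, -(Tm n b k x - Tm n a k x) :=
        tsum_congr (fun k => by ring)
    _ = -(Pm n b a x) := by rw [tsum_neg]; rfl

private lemma logGammaSeq (s : ℝ) (hs : 0 < s) (N : ℕ) (hN : 1 ≤ N) :
    Real.log (Real.GammaSeq s N) = s * Real.log N + Real.log N.factorial
      - ∑ j ∈ range (N + 1), Real.log (s + j) := by
  have hN0 : (0:ℝ) < N := by exact_mod_cast hN
  have hterm : ∀ j ∈ range (N + 1), s + (j:ℝ) ≠ 0 := by
    intro j _
    have : (0:ℝ) ≤ j := Nat.cast_nonneg j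
    positivity
  have hprod : (∏ j ∈ range (N + 1), (s + (j:ℝ))) ≠ 0 := Finset.prod_ne_zero_iff.mpr hterm
  have hrpow : (0:ℝ) < (N:ℝ) ^ s := Real.rpow_pos_of_pos hN0 s
  have hfact : (0:ℝ) < N.factorial := by exact_mod_cast N.factorial_pos
  rw [Real.GammaSeq, Real.log_div (by positivity) hprod, Real.log_mul hrpow.ne' hfact.ne',
    Real.log_rpow hN0, Real.log_prod hterm]

private lemma hasDerivAt_logGamma_diff (a b : ℝ) (ha : 0 ≤ a) (hb : 0 ≤ b) {x : ℝ}
    (hx : 0 < x) :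
    HasDerivAt (fun y => Real.log (Real.Gamma (y + a)) - Real.log (Real.Gamma (y + b)))
      (Pm 0 b a x) x := by
  have hc : 0 < x / 2 := half_pos hx
  apply hasDerivAt_of_tendstoLocallyUniformlyOn (l := atTop) (isOpen_Ioi (a := x / 2))
    (f := fun (N : ℕ) (y : ℝ) => (a - b) * Real.log N
      - ∑ j ∈ range (N + 1), (Real.log (y + a + j) - Real.log (y + b + j)))
    (f' := fun (N : ℕ) (y : ℝ) => ∑ j ∈ range (N + 1), (Tm 0 b j y - Tm 0 a j y))
  · have H := Pm_tendstoUniformlyOn 0 b a hb ha hc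
    have H2 : TendstoUniformlyOn (fun N y => ∑ k ∈ range (N + 1), (Tm 0 b k y - Tm 0 a k y))
        (Pm 0 b a) atTop (Set.Ici (x / 2)) := by
      intro u hu
      exact (tendsto_add_atTop_nat 1).eventually (H u hu)
    exact (H2.mono Set.Ioi_subset_Ici_self).tendstoLocallyUniformlyOn
  · filter_upwards with N y hy
    have hy0 : 0 < y := lt_trans hc hy
    have hsum : HasDerivAt (fun y => ∑ j ∈ range (N + 1),
          (Real.log (y + a + j) - Real.log (y + b + j)))
        (∑ j ∈ range (N + 1), ((y + a + j)⁻¹ - (y + b + j)⁻¹)) y := by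
      apply HasDerivAt.fun_sum
      intro j _
      have hja : 0 < y + a + j := by
        have : (0:ℝ) ≤ j := Nat.cast_nonneg j
        linarith
      have hjb : 0 < y + b + j := by
        have : (0:ℝ) ≤ j := Nat.cast_nonneg j
        linarith
      have h1 : HasDerivAt (fun y : ℝ => y + a + j) 1 y :=
        ((hasDerivAt_id y).add_const a).add_const _
      have h2 : HasDerivAt (fun y : ℝ => y + b + j) 1 y :=
        ((hasDerivAt_id y).add_const b).add_const _
      have := (h1.log hja.ne').fun_sub (h2.log hjb.ne')
      simpa [one_div] using this
    have := hsum.const_sub ((a - b) * Real.log N)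
    convert this using 1
    rw [← Finset.sum_neg_distrib]
    apply Finset.sum_congr rfl
    intro j _
    rw [Tm_zero, Tm_zero]
    ring
  · intro y hy
    have hy0 : 0 < y := lt_trans hc hy
    have hya : 0 < y + a := by linarith
    have hyb : 0 < y + b := by linarith
    have hga : Tendsto (fun N => Real.log (Real.GammaSeq (y + a) N)) atTop
        (𝓝 (Real.log (Real.Gamma (y + a)))) :=
      ((Real.continuousAt_log (Real.Gamma_pos_of_pos hya).ne').tendsto).comp
        (Real.GammaSeq_tendsto_Gamma (y + a))
    have hgb : Tendsto (fun N => Real.log (Real.GammaSeq (y + b) N)) atTop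
        (𝓝 (Real.log (Real.Gamma (y + b)))) :=
      ((Real.continuousAt_log (Real.Gamma_pos_of_pos hyb).ne').tendsto).comp
        (Real.GammaSeq_tendsto_Gamma (y + b))
    apply Tendsto.congr' _ (hga.sub hgb)
    filter_upwards [eventually_ge_atTop 1] with N hN
    rw [logGammaSeq _ hya N hN, logGammaSeq _ hyb N hN, Finset.sum_sub_distrib]
    ring
  · exact Set.mem_Ioi.mpr (half_lt_self hx)

private lemma re_pos_ne_zero {c : ℝ} (hc : 0 < c) {z : ℂ} (hz : c < z.re) (c' : ℝ)
    (hc' : 0 ≤ c') (k : ℕ) : z + c' + k ≠ 0 := by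
  have hre : 0 < (z + c' + k).re := by
    simp only [Complex.add_re, Complex.ofReal_re, Complex.natCast_re]
    have : (0:ℝ) ≤ k := Nat.cast_nonneg k
    linarith
  intro h0
  rw [h0] at hre
  simp at hre

private lemma norm_ck_bound {c : ℝ} (hc : 0 < c) {z : ℂ} (hz : c < z.re) (c' : ℝ)
    (hc' : 0 ≤ c') (k : ℕ) : min c 1 * ((k : ℝ) + 1) ≤ ‖z + c' + k‖ := by
  have h1 : (z + c' + k).re ≤ ‖z + c' + k‖ := by
    calc (z + c' + k).re ≤ |(z + c' + k).re| := le_abs_self _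
      _ ≤ ‖z + c' + k‖ := Complex.abs_re_le_norm _
  have h2 : (z + c' + k).re = z.re + c' + k := by
    simp [Complex.add_re, Complex.ofReal_re, Complex.natCast_re]
  have h3 := ck_bound c' hc' (le_of_lt hz) k
  rw [h2] at h1
  linarith

private lemma analyticAt_Pm_zero (a b : ℝ) (ha : 0 ≤ a) (hb : 0 ≤ b) {x : ℝ} (hx : 0 < x) :
    AnalyticAt ℝ (Pm 0 a b) x := by
  set c := x / 2 with hcdef
  have hc : 0 < c := half_pos hx
  have hm : 0 < min c 1 := lt_min hc one_pos
  set S : Set ℂ := {z : ℂ | c < z.re} with hSdef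
  have hSopen : IsOpen S := isOpen_lt continuous_const Complex.continuous_re
  set Fc : ℂ → ℂ := fun z => ∑' k : ℕ, ((z + a + k)⁻¹ - (z + b + k)⁻¹) with hFc
  have hbound : ∀ (k : ℕ), ∀ z ∈ S, ‖(z + (a:ℂ) + k)⁻¹ - (z + (b:ℂ) + k)⁻¹‖
      ≤ (|a - b| / (min c 1) ^ 2) * (((k : ℝ) + 1) ^ 2)⁻¹ := by
    intro k z hz
    have hz' : c < z.re := hz
    have hna := re_pos_ne_zero hc hz' a ha k
    have hnb := re_pos_ne_zero hc hz' b hb k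
    have he : (z + (a:ℂ) + k)⁻¹ - (z + (b:ℂ) + k)⁻¹
        = (((b - a : ℝ)):ℂ) / ((z + a + k) * (z + b + k)) := by
      push_cast
      field_simp
      ring
    rw [he, norm_div, norm_mul, Complex.norm_real, Real.norm_eq_abs, abs_sub_comm b a]
    have hga := norm_ck_bound hc hz' a ha k
    have hgb := norm_ck_bound hc hz' b hb k
    have hprod : min c 1 ^ 2 * ((k:ℝ)+1)^2 ≤ ‖z + (a:ℂ) + k‖ * ‖z + (b:ℂ) + k‖ := by
      calc min c 1 ^ 2 * ((k:ℝ)+1)^2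
          = (min c 1 * ((k : ℝ) + 1)) * (min c 1 * ((k : ℝ) + 1)) := by ring
        _ ≤ _ := mul_le_mul hga hgb (by positivity) (norm_nonneg _)
    have hrhs : (|a - b| / (min c 1) ^ 2) * (((k : ℝ) + 1) ^ 2)⁻¹
        = |a - b| / (min c 1 ^ 2 * ((k:ℝ)+1)^2) := by
      rw [div_mul_eq_mul_div, div_eq_div_iff (by positivity) (by positivity)]
      field_simp
    rw [hrhs]
    exact div_le_div_of_nonneg_left (abs_nonneg _) (by positivity) hprod
  have hunif : TendstoLocallyUniformlyOn
      (fun N (z : ℂ) => ∑ k ∈ range N, ((z + a + k)⁻¹ - (z + b + k)⁻¹)) Fc atTop S :=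
    (tendstoUniformlyOn_tsum_nat (base_summable.mul_left (|a - b| / (min c 1) ^ 2))
      (fun k z hz => hbound k z hz)).tendstoLocallyUniformlyOn
  have hdiffN : ∀ᶠ N in (atTop : Filter ℕ), DifferentiableOn ℂ
      (fun z : ℂ => ∑ k ∈ range N, ((z + a + k)⁻¹ - (z + b + k)⁻¹)) S := by
    filter_upwards with N
    apply DifferentiableOn.fun_sum
    intro k _
    apply DifferentiableOn.sub
    · apply DifferentiableOn.inv
      · exact (((differentiable_id.add_const _).add_const _)).differentiableOn
      · exact fun z hz => re_pos_ne_zero hc hz a ha k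
    · apply DifferentiableOn.inv
      · exact (((differentiable_id.add_const _).add_const _)).differentiableOn
      · exact fun z hz => re_pos_ne_zero hc hz b hb k
  have hdiff : DifferentiableOn ℂ Fc S := hunif.differentiableOn hdiffN hSopen
  have hxS : (x : ℂ) ∈ S := by
    simp only [hSdef, Set.mem_setOf_eq, Complex.ofReal_re]
    exact half_lt_self hx
  have h1 : AnalyticAt ℂ Fc (x : ℂ) := (hdiff.analyticOnNhd hSopen) _ hxS
  have h3 : AnalyticAt ℝ (fun y : ℝ => Fc (y : ℂ)) x :=
    (h1.restrictScalars).comp (Complex.ofRealCLM.analyticAt x)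
  have h4 : AnalyticAt ℝ (fun y : ℝ => (Fc (y : ℂ)).re) x :=
    (Complex.reCLM.analyticAt _).comp h3
  apply h4.congr
  have key : ∀ y : ℝ, 0 < y → (Fc (y : ℂ)).re = Pm 0 a b y := by
    intro y hy
    have he : Fc (y : ℂ) = ((Pm 0 a b y : ℝ) : ℂ) := by
      rw [hFc, Pm, Complex.ofReal_tsum]
      apply tsum_congr
      intro k
      rw [Tm_zero, Tm_zero]
      push_cast
      field_simp
    rw [he, Complex.ofReal_re]
  exact Filter.eventuallyEq_of_mem (Ioi_mem_nhds hx) (fun y hy => key y hy)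

private lemma Tm_sign (n : ℕ) (a b : ℝ) (k : ℕ) (x : ℝ) :
    (-1 : ℝ) ^ n * (Tm n a k x - Tm n b k x)
      = (n.factorial : ℝ) * (((x + a + k) ^ (n+1))⁻¹ - ((x + b + k) ^ (n+1))⁻¹) := by
  have h11 : ((-1 : ℝ)) ^ n * (-1) ^ n = 1 := by
    rw [← mul_pow]; norm_num
  calc (-1 : ℝ) ^ n * (Tm n a k x - Tm n b k x)
      = ((-1 : ℝ) ^ n * (-1) ^ n) * ((n.factorial : ℝ)
          * (((x + a + k) ^ (n+1))⁻¹ - ((x + b + k) ^ (n+1))⁻¹)) := by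
        rw [Tm, Tm]; ring
    _ = _ := by rw [h11, one_mul]

private lemma sum_Iic_fin {p : ℕ} (f : Fin p → ℝ) (K : Fin p) :
    ∑ i ∈ Finset.Iic K, f i
      = ∑ j ∈ range (K.val + 1), (if h : j < p then f ⟨j, h⟩ else 0) := by
  apply Finset.sum_bij' (i := fun (i : Fin p) (_ : i ∈ Finset.Iic K) => (i : ℕ))
    (j := fun (j : ℕ) (hj : j ∈ range (K.val + 1)) =>
      (⟨j, lt_of_le_of_lt (Nat.lt_succ_iff.mp (Finset.mem_range.mp hj)) K.isLt⟩ : Fin p))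
  case hi =>
    intro i hi
    exact Finset.mem_range.mpr (Nat.lt_succ_iff.mpr (Fin.le_def.mp (Finset.mem_Iic.mp hi)))
  case hj =>
    intro j hj
    exact Finset.mem_Iic.mpr (Fin.le_def.mpr (Nat.lt_succ_iff.mp (Finset.mem_range.mp hj)))
  case left_neg => intro i hi; exact Fin.ext rfl
  case right_neg => intro j hj; rfl
  case h => intro i hi; rw [dif_pos i.isLt]

end Aux

theorem stmt19 (p : ℕ) (hp : 1 ≤ p) (a b : Fin p → ℝ)
    (ha0 : ∀ i, 0 ≤ a i) (hb0 : ∀ i, 0 ≤ b i)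
    (hamono : ∀ i j : Fin p, i ≤ j → a i ≤ a j)
    (hbmono : ∀ i j : Fin p, i ≤ j → b i ≤ b j)
    (hmaj : ∀ k : Fin p, ∑ i ∈ Finset.Iic k, a i ≤ ∑ i ∈ Finset.Iic k, b i) :
    LogCompletelyMonotonic (fun x => ∏ i, Real.Gamma (x + a i) / Real.Gamma (x + b i)) := by
  classical
  have hApos : ∀ (y : ℝ), 0 < y → ∀ i : Fin p, 0 < y + a i := fun y hy i => by
    have := ha0 i; linarith
  have hBpos : ∀ (y : ℝ), 0 < y → ∀ i : Fin p, 0 < y + b i := fun y hy i => by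
    have := hb0 i; linarith
  have hUpos : ∀ y : ℝ, 0 < y → 0 < ∏ i, Real.Gamma (y + a i) / Real.Gamma (y + b i) := by
    intro y hy
    apply Finset.prod_pos
    intro i _
    exact div_pos (Real.Gamma_pos_of_pos (hApos y hy i)) (Real.Gamma_pos_of_pos (hBpos y hy i))
  have hlog : ∀ y : ℝ, 0 < y → Real.log (∏ i, Real.Gamma (y + a i) / Real.Gamma (y + b i))
      = ∑ i, (Real.log (Real.Gamma (y + a i)) - Real.log (Real.Gamma (y + b i))) := by
    intro y hy
    rw [Real.log_prod (fun i _ => div_ne_zero (Real.Gamma_pos_of_pos (hApos y hy i)).ne'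
      (Real.Gamma_pos_of_pos (hBpos y hy i)).ne')]
    exact Finset.sum_congr rfl fun i _ => Real.log_div
      (Real.Gamma_pos_of_pos (hApos y hy i)).ne' (Real.Gamma_pos_of_pos (hBpos y hy i)).ne'
  have hderiv : ∀ y : ℝ, 0 < y →
      deriv (fun t => Real.log (∏ i, Real.Gamma (t + a i) / Real.Gamma (t + b i))) y
        = ∑ i, Pm 0 (b i) (a i) y := by
    intro y hy
    have heq : (fun t => Real.log (∏ i, Real.Gamma (t + a i) / Real.Gamma (t + b i)))
        =ᶠ[𝓝 y] (fun t => ∑ i, (Real.log (Real.Gamma (t + a i))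
          - Real.log (Real.Gamma (t + b i)))) :=
      Filter.eventuallyEq_of_mem (Ioi_mem_nhds hy) (fun t ht => hlog t ht)
    rw [heq.deriv_eq]
    exact (HasDerivAt.fun_sum (fun i _ =>
      hasDerivAt_logGamma_diff (a i) (b i) (ha0 i) (hb0 i) hy)).deriv
  have hM : ∀ y : ℝ, 0 < y →
      -deriv (fun t => Real.log (∏ i, Real.Gamma (t + a i) / Real.Gamma (t + b i))) y
        = ∑ i, Pm 0 (a i) (b i) y := by
    intro y hy
    rw [hderiv y hy, ← Finset.sum_neg_distrib]
    exact Finset.sum_congr rfl fun i _ => (Pm_neg 0 (a i) (b i) y).symm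
  have hGd : ∀ (n : ℕ) (y : ℝ), 0 < y →
      HasDerivAt (fun t => ∑ i, Pm n (a i) (b i) t) (∑ i, Pm (n + 1) (a i) (b i) y) y :=
    fun n y hy => HasDerivAt.fun_sum fun i _ => Pm_hasDerivAt n (a i) (b i) (ha0 i) (hb0 i) hy
  have hiter : ∀ (m : ℕ) (y : ℝ), 0 < y →
      iteratedDeriv m (fun t => -deriv
          (fun s => Real.log (∏ i, Real.Gamma (s + a i) / Real.Gamma (s + b i))) t) y
        = ∑ i, Pm m (a i) (b i) y := by
    intro m
    induction m with
    | zero =>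
      intro y hy
      rw [iteratedDeriv_zero]
      exact hM y hy
    | succ m ih =>
      intro y hy
      rw [iteratedDeriv_succ]
      have heq : iteratedDeriv m (fun t => -deriv
            (fun s => Real.log (∏ i, Real.Gamma (s + a i) / Real.Gamma (s + b i))) t)
          =ᶠ[𝓝 y] (fun t => ∑ i, Pm m (a i) (b i) t) :=
        Filter.eventuallyEq_of_mem (Ioi_mem_nhds hy) (fun t ht => ih t ht)
      rw [heq.deriv_eq]
      exact (hGd m y hy).deriv
  refine ⟨fun x hx => hUpos x hx, fun x hx => ?_, fun n x hx => ?_⟩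
  · -- smoothness
    have hGA : AnalyticAt ℝ (fun t => ∑ i, Pm 0 (a i) (b i) t) x :=
      Finset.analyticAt_fun_sum _ (fun i _ => analyticAt_Pm_zero (a i) (b i) (ha0 i) (hb0 i) hx)
    have hMA : AnalyticAt ℝ (fun t => -deriv
        (fun s => Real.log (∏ i, Real.Gamma (s + a i) / Real.Gamma (s + b i))) t) x :=
      hGA.congr (Filter.eventuallyEq_of_mem (Ioi_mem_nhds hx) (fun t ht => (hM t ht).symm))
    exact hMA.contDiffAt
  · -- sign of iterated derivatives
    show 0 ≤ (-1 : ℝ) ^ n * iteratedDeriv n (fun t => -deriv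
        (fun s => Real.log (∏ i, Real.Gamma (s + a i) / Real.Gamma (s + b i))) t) x
    rw [hiter n x hx]
    set A : ℕ → ℝ := fun j => if h : j < p then a ⟨j, h⟩ else 0 with hA
    set B : ℕ → ℝ := fun j => if h : j < p then b ⟨j, h⟩ else 0 with hB
    have hA0 : ∀ j, j < p → 0 ≤ A j := by
      intro j hj
      simp only [hA, dif_pos hj]
      exact ha0 _
    have hB0 : ∀ j, j < p → 0 ≤ B j := by
      intro j hj
      simp only [hB, dif_pos hj]
      exact hb0 _
    have hBm : ∀ j, j + 1 < p → B j ≤ B (j + 1) := by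
      intro j hj
      have hj' : j < p := by omega
      simp only [hB, dif_pos hj, dif_pos hj']
      exact hbmono ⟨j, hj'⟩ ⟨j + 1, hj⟩ (by rw [Fin.le_def]; exact Nat.le_succ j)
    have hS : ∀ K, K < p → ∑ j ∈ Finset.range (K + 1), A j ≤ ∑ j ∈ Finset.range (K + 1), B j := by
      intro K hK
      have h1 := hmaj ⟨K, hK⟩
      rw [sum_Iic_fin a ⟨K, hK⟩, sum_Iic_fin b ⟨K, hK⟩] at h1
      simpa only [hA, hB] using h1
    have key : ∀ k : ℕ, ∑ i : Fin p, ((x + b i + k) ^ (n + 1))⁻¹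
        ≤ ∑ i : Fin p, ((x + a i + k) ^ (n + 1))⁻¹ := by
      intro k
      have hxk : 0 < x + (k : ℝ) := by
        have : (0:ℝ) ≤ k := Nat.cast_nonneg k
        linarith
      have hmj := maj_ineq p hp n (x + k) hxk A B hA0 hB0 hBm hS
      have e1 : ∑ j ∈ Finset.range p, ((x + (k:ℝ) + A j) ^ (n + 1))⁻¹
          = ∑ i : Fin p, ((x + a i + k) ^ (n + 1))⁻¹ := by
        rw [← Fin.sum_univ_eq_sum_range (fun j => ((x + (k:ℝ) + A j) ^ (n + 1))⁻¹) p]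
        apply Finset.sum_congr rfl
        intro i _
        have hAi : A i.val = a i := by simp only [hA, dif_pos i.isLt]
        rw [hAi]
        have : x + (k:ℝ) + a i = x + a i + k := by ring
        rw [this]
      have e2 : ∑ j ∈ Finset.range p, ((x + (k:ℝ) + B j) ^ (n + 1))⁻¹
          = ∑ i : Fin p, ((x + b i + k) ^ (n + 1))⁻¹ := by
        rw [← Fin.sum_univ_eq_sum_range (fun j => ((x + (k:ℝ) + B j) ^ (n + 1))⁻¹) p]
        apply Finset.sum_congr rfl
        intro i _
        have hBi : B i.val = b i := by simp only [hB, dif_pos i.isLt]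
        rw [hBi]
        have : x + (k:ℝ) + b i = x + b i + k := by ring
        rw [this]
      rw [e1, e2] at hmj
      exact hmj
    have hFs : ∀ i : Fin p, Summable (fun k : ℕ => (n.factorial : ℝ)
        * (((x + a i + k) ^ (n + 1))⁻¹ - ((x + b i + k) ^ (n + 1))⁻¹)) := by
      intro i
      have h := (Pm_summable n (a i) (b i) (ha0 i) (hb0 i) hx).mul_left ((-1 : ℝ) ^ n)
      exact h.congr (fun k => Tm_sign n (a i) (b i) k x)
    calc (0:ℝ)
        ≤ ∑' k : ℕ, ∑ i : Fin p, (n.factorial : ℝ)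
            * (((x + a i + k) ^ (n + 1))⁻¹ - ((x + b i + k) ^ (n + 1))⁻¹) := by
          apply tsum_nonneg
          intro k
          rw [← Finset.mul_sum]
          have hsub : 0 ≤ ∑ i : Fin p, (((x + a i + k) ^ (n + 1))⁻¹
              - ((x + b i + k) ^ (n + 1))⁻¹) := by
            rw [Finset.sum_sub_distrib]
            have := key k
            linarith
          exact mul_nonneg (Nat.cast_nonneg _) hsub
      _ = ∑ i : Fin p, ∑' k : ℕ, (n.factorial : ℝ)
            * (((x + a i + k) ^ (n + 1))⁻¹ - ((x + b i + k) ^ (n + 1))⁻¹) :=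
          Summable.tsum_finsetSum (fun i _ => hFs i)
      _ = ∑ i : Fin p, (-1 : ℝ) ^ n * Pm n (a i) (b i) x := by
          apply Finset.sum_congr rfl
          intro i _
          rw [Pm, ← tsum_mul_left]
          exact tsum_congr fun k => (Tm_sign n (a i) (b i) k x).symm
      _ = (-1 : ℝ) ^ n * ∑ i : Fin p, Pm n (a i) (b i) x := by rw [Finset.mul_sum]
end
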